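/- arXiv:2407.13964 — 2 statements merged into one kernel-verified Lean document; each statement's English description precedes it below -/
import Mathlib

section
/- Let l ∈ (0,1), let σ be a Blackwell order preserving probability kernel, and let μ, μ' be measures on [0,1] with |μ| = |μ'| > 0, equal barycenters μ̄ = μ̄', and μ' ⪯_B μ. Let ν' ≤ μ' be a measure with 0 < |ν'| < |μ'| and ν̄' = l. Then there exists an interval measure ν for μ (with threshold l) such that |ν| = |ν'|, ν̄ = l, and σ∘(μ' − ν') ⪯_B σ∘(μ − ν). -/
open MeasureTheory Set
open scoped ENNReal unitInterval Classical
open Filter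
open scoped Topology

noncomputable section

namespace Persuasion

/-- Total mass of a measure on the unit interval. -/
def tmass (μ : Measure I) : ℝ := (μ univ).toReal

/-- Integral of the identity. -/
def intg (μ : Measure I) : ℝ := ∫ x, (x : ℝ) ∂μ

/-- Barycenter. -/
def bary (μ : Measure I) : ℝ := intg μ / tmass μ

/-- Blackwell order: `BLE μ ν` means `μ ⪯_B ν`. -/
def BLE (μ ν : Measure I) : Prop :=
  ∀ f : ℝ → ℝ, ContinuousOn f (Icc (0:ℝ) 1) → ConcaveOn ℝ (Icc (0:ℝ) 1) f →
    (∫ x, f (x : ℝ) ∂ν) / tmass ν ≤ (∫ x, f (x : ℝ) ∂μ) / tmass μ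

/-- First order stochastic dominance `λ ⪯_F μ`. -/
def FLE (lam mu : Measure I) : Prop :=
  ∀ x : ℝ, lam {y : I | x ≤ (y : ℝ)} ≤ mu {y : I | x ≤ (y : ℝ)}

/-- A probability kernel with the martingale (barycenter) property. -/
structure ProbKernel where
  k : I → Measure I
  meas : Measurable k
  prob : ∀ x, IsProbabilityMeasure (k x)
  bary_eq : ∀ x : I, ∫ y, (y : ℝ) ∂(k x) = (x : ℝ)

/-- Pushforward of a measure through a kernel. -/
def push (K : ProbKernel) (μ : Measure I) : Measure I := μ.bind K.k

/-- Blackwell order preserving kernels. -/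
def BlackwellPreserving (K : ProbKernel) : Prop :=
  ∀ μ ν : Measure I, IsProbabilityMeasure μ → IsProbabilityMeasure ν →
    bary μ = bary ν → BLE μ ν → BLE (push K μ) (push K ν)

/-- FOSD kernel. -/
structure FOSDKernel where
  k : I → Measure I
  meas : Measurable k
  prob : ∀ x, IsProbabilityMeasure (k x)
  up : ∀ x : I, k x {y : I | (x : ℝ) ≤ (y : ℝ)} = 1

/-- Domination order `λ ⪯_D μ`. -/
def DomLE (lam mu : Measure I) : Prop :=
  ∃ (φ : FOSDKernel) (ρ : ProbKernel), ((lam.bind φ.k).bind ρ.k) ≤ mu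

/-- Interval measure for `μ` with threshold `l`. -/
def IsIntervalMeasure (l : ℝ) (μ ν : Measure I) : Prop :=
  ν ≤ μ ∧ bary ν = l ∧
    ∃ y₁ y₂ : ℝ, 0 ≤ y₁ ∧ y₁ ≤ y₂ ∧ y₂ ≤ 1 ∧
      ν.restrict {x : I | y₁ < (x : ℝ) ∧ (x : ℝ) < y₂} =
        μ.restrict {x : I | y₁ < (x : ℝ) ∧ (x : ℝ) < y₂} ∧
      ν {x : I | (x : ℝ) < y₁ ∨ y₂ < (x : ℝ)} = 0

/-- Greedy measure predicate. -/
def IsGreedy (l : ℝ) (μ ν : Measure I) : Prop :=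
  ν ≤ μ ∧ bary ν = l ∧
    ∃ y : ℝ, 0 ≤ y ∧ y ≤ 1 ∧
      ν.restrict {x : I | y < (x : ℝ)} = μ.restrict {x : I | y < (x : ℝ)} ∧
      ν {x : I | (x : ℝ) < y} = 0

/-- The greedy measure (zero if none exists). -/
def greedy (l : ℝ) (μ : Measure I) : Measure I :=
  if h : ∃ ν, IsGreedy l μ ν then h.choose else 0

/-- Greedy mass. -/
def gmass (l : ℝ) (μ : Measure I) : ℝ := tmass (greedy l μ)

/-- Sequence of residual measures generated by a policy
(internal period `t : ℕ` corresponds to the paper's period `t+1`). -/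
def policySeq (σk : ℕ → ProbKernel) (μ₁ : Measure I) (ν : ℕ → Measure I) : ℕ → Measure I
  | 0 => μ₁
  | t + 1 => push (σk t) (policySeq σk μ₁ ν t - ν t)

/-- Feasibility of a policy for horizon `T`. -/
def Feasible (T : ℕ∞) (l : ℝ) (σk : ℕ → ProbKernel) (μ₁ : Measure I) (ν : ℕ → Measure I) : Prop :=
  (∀ t : ℕ, (t : ℕ∞) < T →
      ν t ≤ policySeq σk μ₁ ν t ∧ l * tmass (ν t) ≤ intg (ν t)) ∧
  (∀ t : ℕ, ¬ (t : ℕ∞) < T → ν t = 0)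

/-- Value of a policy (the weight `w t` is the paper's `w_{t+1}`). -/
def value (T : ℕ∞) (w : ℕ → ℝ) (ν : ℕ → Measure I) : ℝ≥0∞ :=
  ∑' t : ℕ, if (t : ℕ∞) < T then ENNReal.ofReal (w t) * (ν t univ) else 0

/-- The sender's value: supremum over feasible policies. -/
def senderValue (T : ℕ∞) (l : ℝ) (σk : ℕ → ProbKernel) (μ₁ : Measure I) (w : ℕ → ℝ) : ℝ≥0∞ :=
  ⨆ (ν : ℕ → Measure I) (_ : Feasible T l σk μ₁ ν), value T w ν

/-- Greedy state/action sequence with horizon `T`. -/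
def gSeq (T : ℕ∞) (l : ℝ) (σk : ℕ → ProbKernel) (μ₁ : Measure I) : ℕ → Measure I × Measure I
  | 0 => (μ₁, if ((0 : ℕ) : ℕ∞) < T then greedy l μ₁ else 0)
  | t + 1 =>
      (push (σk t) ((gSeq T l σk μ₁ t).1 - (gSeq T l σk μ₁ t).2),
        if ((t + 1 : ℕ) : ℕ∞) < T then
          greedy l (push (σk t) ((gSeq T l σk μ₁ t).1 - (gSeq T l σk μ₁ t).2)) else 0)

/-- The greedy policy. -/
def greedyPolicy (T : ℕ∞) (l : ℝ) (σk : ℕ → ProbKernel) (μ₁ : Measure I) (t : ℕ) : Measure I :=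
  (gSeq T l σk μ₁ t).2

/-- Grids: `Z = ℤ ∩ [a,b]` is captured by order-connectedness. -/
structure Grid where
  Z : Set ℤ
  ordConn : Z.OrdConnected
  z : ℤ → I
  mono : ∀ i j, i ∈ Z → j ∈ Z → i < j → (z i : ℝ) < (z j : ℝ)

/-- The random-walk kernel on a grid. -/
def IsRWKernel (G : Grid) (K : ProbKernel) : Prop :=
  ∀ j ∈ G.Z,
    ((j - 1 ∈ G.Z → j + 1 ∈ G.Z →
        K.k (G.z j) =
          ENNReal.ofReal (((G.z (j + 1) : ℝ) - (G.z j : ℝ)) /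
              ((G.z (j + 1) : ℝ) - (G.z (j - 1) : ℝ))) • Measure.dirac (G.z (j - 1)) +
          ENNReal.ofReal (((G.z j : ℝ) - (G.z (j - 1) : ℝ)) /
              ((G.z (j + 1) : ℝ) - (G.z (j - 1) : ℝ))) • Measure.dirac (G.z (j + 1)))) ∧
    ((j - 1 ∉ G.Z ∨ j + 1 ∉ G.Z) → K.k (G.z j) = Measure.dirac (G.z j))

/-- `D(Γ)` for threshold `l`. -/
def Dval (G : Grid) (l : ℝ) : ℝ :=
  sSup {d : ℝ | ∃ j : ℤ, j ≤ 0 ∧ j - 1 ∈ G.Z ∧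
    d = (l - (G.z (j - 1) : ℝ)) / (l - (G.z j : ℝ))}

/-- Endpoint index of a grid. -/
def IsEndpointIdx (G : Grid) (j : ℤ) : Prop := j ∈ G.Z ∧ (j - 1 ∉ G.Z ∨ j + 1 ∉ G.Z)

/-- The measure is supported on the grid. -/
def SuppOnGrid (G : Grid) (μ : Measure I) : Prop :=
  μ {x : I | ¬ ∃ j ∈ G.Z, x = G.z j} = 0

/-- `Δ*(Γ)`: supported on even- or on odd-indexed points (endpoints count as both). -/
def MemDeltaStar (G : Grid) (μ : Measure I) : Prop :=
  (μ {x : I | ¬ ∃ j ∈ G.Z, (Even j ∨ IsEndpointIdx G j) ∧ x = G.z j} = 0) ∨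
  (μ {x : I | ¬ ∃ j ∈ G.Z, (Odd j ∨ IsEndpointIdx G j) ∧ x = G.z j} = 0)


section AUX

lemma continuous_cf {f : ℝ → ℝ} (hf : ContinuousOn f (Icc 0 1)) :
    Continuous fun x : I => f ↑x :=
  hf.comp_continuous continuous_subtype_val fun x => x.2

lemma integrable_cf {f : ℝ → ℝ} (hf : ContinuousOn f (Icc 0 1)) (μ : Measure I)
    [IsFiniteMeasure μ] : Integrable (fun x : I => f ↑x) μ := by
  obtain ⟨C, hC⟩ := isCompact_Icc.exists_bound_of_continuousOn hf
  exact (integrable_const C).mono' (continuous_cf hf).aestronglyMeasurable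
    (ae_of_all _ fun x => hC _ x.2)

lemma integrable_coe (μ : Measure I) [IsFiniteMeasure μ] :
    Integrable (fun x : I => (x : ℝ)) μ :=
  integrable_cf continuousOn_id μ

lemma integral_sub_measure (μ ν : Measure I) [IsFiniteMeasure μ] (hle : ν ≤ μ)
    (g : I → ℝ) (hg : Integrable g μ) :
    ∫ x, g x ∂(μ - ν) = ∫ x, g x ∂μ - ∫ x, g x ∂ν := by
  haveI : IsFiniteMeasure ν := isFiniteMeasure_of_le μ hle
  have h := Measure.sub_add_cancel_of_le hle
  have h2 : ∫ x, g x ∂μ = ∫ x, g x ∂(μ - ν) + ∫ x, g x ∂ν := by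
    conv_lhs => rw [← h]
    exact integral_add_measure (hg.mono_measure (Measure.sub_le))
      (hg.mono_measure hle)
  linarith

lemma tmass_nonneg (μ : Measure I) : 0 ≤ tmass μ := ENNReal.toReal_nonneg

lemma univ_eq_ofReal (μ : Measure I) [IsFiniteMeasure μ] :
    μ univ = ENNReal.ofReal (tmass μ) := (ENNReal.ofReal_toReal (measure_ne_top μ _)).symm

lemma tmass_sub (μ ν : Measure I) [IsFiniteMeasure μ] (hle : ν ≤ μ) :
    tmass (μ - ν) = tmass μ - tmass ν := by
  haveI : IsFiniteMeasure ν := isFiniteMeasure_of_le μ hle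
  rw [tmass, Measure.sub_apply MeasurableSet.univ hle,
    ENNReal.toReal_sub_of_le (hle univ) (measure_ne_top μ _)]
  rfl

lemma tmass_smul (c : ℝ≥0∞) (μ : Measure I) : tmass (c • μ) = c.toReal * tmass μ := by
  simp [tmass, ENNReal.toReal_mul]

lemma integral_smul_measure' (c : ℝ≥0∞) (μ : Measure I) (g : I → ℝ) :
    ∫ x, g x ∂(c • μ) = c.toReal * ∫ x, g x ∂μ := by
  rw [integral_smul_measure]; rfl

lemma BLE_smul (c : ℝ≥0∞) (hc : c ≠ 0) (hc' : c ≠ ⊤) {μ ν : Measure I} (h : BLE μ ν) :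
    BLE (c • μ) (c • ν) := by
  intro f hfc hfcc
  have hct : (0:ℝ) < c.toReal := ENNReal.toReal_pos hc hc'
  rw [integral_smul_measure', integral_smul_measure', tmass_smul, tmass_smul,
    mul_div_mul_left _ _ (ne_of_gt hct), mul_div_mul_left _ _ (ne_of_gt hct)]
  exact h f hfc hfcc

lemma push_apply (K : ProbKernel) (μ : Measure I) {s : Set I} (hs : MeasurableSet s) :
    push K μ s = ∫⁻ x, K.k x s ∂μ :=
  Measure.bind_apply hs K.meas.aemeasurable

lemma push_smul (K : ProbKernel) (c : ℝ≥0∞) (μ : Measure I) :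
    push K (c • μ) = c • push K μ := by
  ext s hs
  rw [Measure.smul_apply, push_apply K _ hs, push_apply K _ hs, lintegral_smul_measure]

lemma push_univ (K : ProbKernel) (μ : Measure I) : push K μ univ = μ univ := by
  rw [push_apply K μ MeasurableSet.univ]
  simp [(K.prob _).measure_univ]

instance push_finite (K : ProbKernel) (μ : Measure I) [IsFiniteMeasure μ] :
    IsFiniteMeasure (push K μ) :=
  ⟨by rw [push_univ]; exact measure_lt_top μ _⟩

lemma ConcaveOn_min {f g : ℝ → ℝ} (hf : ConcaveOn ℝ (Icc 0 1) f)
    (hg : ConcaveOn ℝ (Icc 0 1) g) :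
    ConcaveOn ℝ (Icc 0 1) (fun x => min (f x) (g x)) := by
  refine ⟨convex_Icc _ _, fun x hx y hy a b ha hb hab => ?_⟩
  have h1 := hf.2 hx hy ha hb hab
  have h2 := hg.2 hx hy ha hb hab
  refine le_min (le_trans ?_ h1) (le_trans ?_ h2) <;>
    simp only [smul_eq_mul] <;> gcongr
  · exact min_le_left _ _
  · exact min_le_left _ _
  · exact min_le_right _ _
  · exact min_le_right _ _

lemma concaveOn_affine (p q : ℝ) : ConcaveOn ℝ (Icc 0 1) (fun x => p + q * x) := by
  refine ⟨convex_Icc _ _, fun x _ y _ a b ha hb hab => ?_⟩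
  simp only [smul_eq_mul]
  have : b = 1 - a := by linarith
  subst this; ring_nf; nlinarith []


end AUX


/-- chord of f over [a,b] -/
def chord (f : ℝ → ℝ) (a b : ℝ) : ℝ → ℝ :=
  fun x => f a + (f b - f a) / (b - a) * (x - a)

lemma chord_eval_left (f : ℝ → ℝ) (a b : ℝ) : chord f a b a = f a := by simp [chord]

lemma chord_eval_right (f : ℝ → ℝ) {a b : ℝ} (h : a < b) : chord f a b b = f b := by
  have : b - a ≠ 0 := by linarith
  unfold chord; rw [div_mul_cancel₀ _ this]; ring

lemma chord_concave (f : ℝ → ℝ) (a b : ℝ) : ConcaveOn ℝ (Icc 0 1) (chord f a b) := by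
  have : chord f a b = fun x => (f a - (f b - f a) / (b - a) * a) + (f b - f a)/(b-a) * x := by
    funext x; simp [chord]; ring
  rw [this]; exact concaveOn_affine _ _

lemma chord_continuous (f : ℝ → ℝ) (a b : ℝ) : Continuous (chord f a b) := by
  unfold chord; fun_prop

/-- inside the interval, the chord is below f -/
lemma chord_le_inside {f : ℝ → ℝ} (hf : ConcaveOn ℝ (Icc 0 1) f)
    {a b x : ℝ} (ha : a ∈ Icc (0:ℝ) 1) (hb : b ∈ Icc (0:ℝ) 1) (hab : a < b)
    (hax : a ≤ x) (hxb : x ≤ b) : chord f a b x ≤ f x := by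
  have hba : (0:ℝ) < b - a := by linarith
  set t : ℝ := (x - a) / (b - a) with ht
  have ht0 : 0 ≤ t := div_nonneg (by linarith) hba.le
  have ht1 : t ≤ 1 := by rw [div_le_one hba]; linarith
  have hcomb : (1 - t) • a + t • b = x := by
    have h5 : t * (b - a) = x - a := by rw [ht]; exact div_mul_cancel₀ _ hba.ne'
    simp only [smul_eq_mul]; linear_combination h5
  have := hf.2 ha hb (by linarith : (0:ℝ) ≤ 1 - t) ht0 (by ring)
  rw [hcomb] at this
  simp only [smul_eq_mul] at this
  have hgoal : chord f a b x = (1 - t) * f a + t * f b := by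
    rw [chord, ht]; field_simp; ring
  linarith

/-- outside to the right, f is below the chord -/
lemma le_chord_right {f : ℝ → ℝ} (hf : ConcaveOn ℝ (Icc 0 1) f)
    {a b x : ℝ} (ha : a ∈ Icc (0:ℝ) 1) (hx : x ∈ Icc (0:ℝ) 1) (hab : a < b)
    (hbx : b ≤ x) : f x ≤ chord f a b x := by
  rcases eq_or_lt_of_le hbx with rfl | hbx
  · rw [chord_eval_right f hab]
  have hxa : (0:ℝ) < x - a := by linarith
  have hba : (0:ℝ) < b - a := by linarith
  set t : ℝ := (b - a) / (x - a) with ht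
  have ht0 : 0 < t := div_pos hba hxa
  have ht1 : t ≤ 1 := by rw [div_le_one hxa]; linarith
  have hcomb : (1 - t) • a + t • x = b := by
    have h5 : t * (x - a) = b - a := by rw [ht]; exact div_mul_cancel₀ _ hxa.ne'
    simp only [smul_eq_mul]; linear_combination h5
  have hcc := hf.2 ha hx (by linarith : (0:ℝ) ≤ 1 - t) ht0.le (by ring)
  rw [hcomb] at hcc
  simp only [smul_eq_mul] at hcc
  -- hcc : (1-t) * f a + t * f x ≤ f b
  have h2 : f x - f a ≤ (f b - f a) / (b - a) * (x - a) := by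
    rw [div_mul_eq_mul_div, le_div_iff₀ hba]
    have h5 : t * (x - a) = b - a := by rw [ht]; exact div_mul_cancel₀ _ hxa.ne'
    have key : f a * (x-a) + (b-a)*(f x - f a) ≤ f b * (x-a) := by
      calc f a*(x-a) + (b-a)*(f x - f a) = ((1-t)*f a + t*f x)*(x-a) := by
            rw [← h5]; ring
        _ ≤ f b * (x-a) := mul_le_mul_of_nonneg_right hcc hxa.le
    nlinarith [key]
  rw [chord]; linarith

/-- outside to the left, f is below the chord -/
lemma le_chord_left {f : ℝ → ℝ} (hf : ConcaveOn ℝ (Icc 0 1) f)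
    {a b x : ℝ} (hb : b ∈ Icc (0:ℝ) 1) (hx : x ∈ Icc (0:ℝ) 1) (hab : a < b)
    (hxa : x ≤ a) : f x ≤ chord f a b x := by
  rcases eq_or_lt_of_le hxa with rfl | hxa
  · rw [chord_eval_left]
  have hbx : (0:ℝ) < b - x := by linarith
  have hba : (0:ℝ) < b - a := by linarith
  set t : ℝ := (b - a) / (b - x) with ht
  have ht0 : 0 < t := div_pos hba hbx
  have ht1 : t ≤ 1 := by rw [div_le_one hbx]; linarith
  have hcomb : t • x + (1 - t) • b = a := by
    have h5 : t * (b - x) = b - a := by rw [ht]; exact div_mul_cancel₀ _ hbx.ne'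
    simp only [smul_eq_mul]; linear_combination (-1 : ℝ) * h5
  have hcc := hf.2 hx hb ht0.le (by linarith : (0:ℝ) ≤ 1 - t) (by ring)
  rw [hcomb] at hcc
  simp only [smul_eq_mul] at hcc
  -- hcc : t * f x + (1-t) * f b ≤ f a
  have h2 : f x - f a ≤ (f b - f a) / (b - a) * (x - a) := by
    rw [div_mul_eq_mul_div, le_div_iff₀ hba]
    have h5 : t * (b - x) = b - a := by rw [ht]; exact div_mul_cancel₀ _ hbx.ne'
    have key : (b-a)*f x + (a-x)*f b ≤ f a * (b-x) := by
      calc (b-a)*f x + (a-x)*f b = (t*f x + (1-t)*f b)*(b-x) := by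
            linear_combination (f b - f x) * h5
        _ ≤ f a * (b-x) := mul_le_mul_of_nonneg_right hcc hbx.le
    nlinarith [key]
  rw [chord]; linarith


section Quant

/-- CDF of μ -/
def FF (μ : Measure I) (y : ℝ) : ℝ := (μ {x : I | (x:ℝ) ≤ y}).toReal

/-- quantile function of μ, valued in [0,1] -/
def qq (μ : Measure I) (s : ℝ) : ℝ :=
  sInf {y ∈ Icc (0:ℝ) 1 | min s (tmass μ) ≤ FF μ y}

variable (μ : Measure I) [IsFiniteMeasure μ]

lemma measurable_le_set (y : ℝ) : MeasurableSet {x : I | (x:ℝ) ≤ y} :=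
  measurableSet_le measurable_subtype_coe measurable_const

lemma FF_mono : Monotone (FF μ) := fun y z hyz =>
  ENNReal.toReal_mono (measure_ne_top μ _) (measure_mono fun x hx => le_trans hx hyz)

lemma FF_of_one_le {y : ℝ} (hy : 1 ≤ y) : FF μ y = tmass μ := by
  unfold FF tmass
  congr 1
  exact congrArg μ (eq_univ_of_forall fun x => le_trans x.2.2 hy)

lemma FF_of_neg {y : ℝ} (hy : y < 0) : FF μ y = 0 := by
  unfold FF
  have : {x : I | (x:ℝ) ≤ y} = ∅ := eq_empty_of_forall_notMem fun x hx => by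
    have := x.2.1; simp only [mem_setOf_eq] at hx; linarith
  simp [this]

lemma FF_le_tmass (y : ℝ) : FF μ y ≤ tmass μ :=
  ENNReal.toReal_mono (measure_ne_top μ _) (measure_mono (subset_univ _))

lemma qqSet_nonempty (s : ℝ) : {y ∈ Icc (0:ℝ) 1 | min s (tmass μ) ≤ FF μ y}.Nonempty :=
  ⟨1, ⟨right_mem_Icc.2 zero_le_one, by rw [FF_of_one_le μ le_rfl]; exact min_le_right _ _⟩⟩

lemma qqSet_bddBelow (s : ℝ) : BddBelow {y ∈ Icc (0:ℝ) 1 | min s (tmass μ) ≤ FF μ y} :=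
  ⟨0, fun y hy => hy.1.1⟩

lemma qq_mem_Icc (s : ℝ) : qq μ s ∈ Icc (0:ℝ) 1 :=
  ⟨le_csInf (qqSet_nonempty μ s) fun y hy => hy.1.1,
   csInf_le (qqSet_bddBelow μ s)
     ⟨right_mem_Icc.2 zero_le_one, by rw [FF_of_one_le μ le_rfl]; exact min_le_right _ _⟩⟩

lemma qq_mono : Monotone (qq μ) := fun s s' hss' =>
  csInf_le_csInf (qqSet_bddBelow μ s) (qqSet_nonempty μ s')
    (fun y hy => ⟨hy.1, le_trans (min_le_min_right _ hss') hy.2⟩)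

/-- right-continuity: the inf is attained -/
lemma min_le_FF_qq (s : ℝ) : min s (tmass μ) ≤ FF μ (qq μ s) := by
  set y₀ := qq μ s with hy₀
  -- for every n, min s M ≤ FF (y₀ + 1/(n+1))
  have hstep : ∀ n : ℕ, min s (tmass μ) ≤ FF μ (y₀ + 1/(n+1)) := by
    intro n
    have hpos : (0:ℝ) < 1/(n+1) := by positivity
    obtain ⟨z, hz, hzlt⟩ := exists_lt_of_csInf_lt (qqSet_nonempty μ s)
      (show y₀ < y₀ + 1/(n+1) by linarith)
    exact le_trans hz.2 (FF_mono μ hzlt.le)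
  -- sets decrease to {x ≤ y₀}
  set S : ℕ → Set I := fun n => {x : I | (x:ℝ) ≤ y₀ + 1/(n+1)} with hS
  have hinter : ⋂ n, S n = {x : I | (x:ℝ) ≤ y₀} := by
    ext x
    simp only [mem_iInter, hS, mem_setOf_eq]
    constructor
    · intro h
      by_contra hlt
      push_neg at hlt
      obtain ⟨n, hn⟩ := exists_nat_one_div_lt (show (0:ℝ) < (x:ℝ) - y₀ by linarith)
      have := h n
      linarith [hn]
    · intro h n
      have : (0:ℝ) < 1/(n+1) := by positivity
      linarith
  have hanti : Antitone S := by
    intro n m hnm x hx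
    simp only [hS, mem_setOf_eq] at hx ⊢
    have h1 : (1:ℝ)/(m+1) ≤ 1/(n+1) := by
      apply one_div_le_one_div_of_le (by positivity)
      have : (n:ℝ) ≤ m := Nat.cast_le.2 hnm
      linarith
    linarith
  have htend : Tendsto (fun n => μ (S n)) atTop (𝓝 (μ {x : I | (x:ℝ) ≤ y₀})) := by
    rw [← hinter]
    exact tendsto_measure_iInter_atTop
      (fun n => (measurable_le_set (y₀ + 1/(n+1))).nullMeasurableSet)
      hanti ⟨0, measure_ne_top μ _⟩
  have htend' : Tendsto (fun n : ℕ => FF μ (y₀ + 1/(n+1))) atTop (𝓝 (FF μ y₀)) := by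
    unfold FF
    exact (ENNReal.tendsto_toReal_iff (fun n => measure_ne_top μ _)
      (measure_ne_top μ _)).2 htend
  exact ge_of_tendsto' htend' hstep

/-- Galois connection between qq and FF -/
lemma qq_galois {s : ℝ} (hs : s ∈ Ioc (0:ℝ) (tmass μ)) (y : ℝ) :
    qq μ s ≤ y ↔ s ≤ FF μ y := by
  have hmin : min s (tmass μ) = s := min_eq_left hs.2
  constructor
  · intro h
    have h1 : s ≤ FF μ (qq μ s) := by
      have := min_le_FF_qq μ s; rwa [hmin] at this
    exact h1.trans (FF_mono μ h)
  · intro h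
    rcases lt_or_ge y 0 with hy | hy
    · exfalso
      rw [FF_of_neg μ hy] at h
      linarith [hs.1]
    rcases le_or_gt y 1 with hy1 | hy1
    · exact csInf_le (qqSet_bddBelow μ s) ⟨⟨hy, hy1⟩, by rwa [hmin]⟩
    · exact le_trans (qq_mem_Icc μ s).2 hy1.le

/-- the quantile map into I -/
def Qmap (μ : Measure I) [IsFiniteMeasure μ] : ℝ → I := fun s => ⟨qq μ s, qq_mem_Icc μ s⟩

lemma measurable_qq : Measurable (qq μ) := (qq_mono μ).measurable

lemma measurable_Qmap : Measurable (Qmap μ) := (measurable_qq μ).subtype_mk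

/-- the fundamental pushforward identity -/
lemma map_Qmap_eq :
    Measure.map (Qmap μ) (volume.restrict (Ioc (0:ℝ) (tmass μ))) = μ := by
  set M := tmass μ with hM
  set η := Measure.map (Qmap μ) (volume.restrict (Ioc (0:ℝ) M)) with hη
  haveI : IsFiniteMeasure (volume.restrict (Ioc (0:ℝ) M)) :=
    ⟨by rw [Measure.restrict_apply_univ]; exact measure_Ioc_lt_top⟩
  haveI : IsFiniteMeasure η := Measure.isFiniteMeasure_map _ _
  have hcoe : Measurable ((↑) : I → ℝ) := measurable_subtype_coe
  have hemb : MeasurableEmbedding ((↑) : I → ℝ) :=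
    MeasurableEmbedding.subtype_coe measurableSet_Icc
  -- it suffices to show the pushforwards to ℝ agree
  suffices hR : Measure.map ((↑) : I → ℝ) η = Measure.map ((↑) : I → ℝ) μ by
    ext B hB
    have h1 : η B = Measure.map ((↑) : I → ℝ) η (((↑) : I → ℝ) '' B) := by
      rw [hemb.map_apply, preimage_image_eq _ Subtype.coe_injective]
    have h2 : μ B = Measure.map ((↑) : I → ℝ) μ (((↑) : I → ℝ) '' B) := by
      rw [hemb.map_apply, preimage_image_eq _ Subtype.coe_injective]
    rw [h1, h2, hR]
  have hmapmap : Measure.map ((↑) : I → ℝ) η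
      = Measure.map (qq μ) (volume.restrict (Ioc (0:ℝ) M)) := by
    rw [hη, Measure.map_map hcoe (measurable_Qmap μ)]
    rfl
  rw [hmapmap]
  haveI : IsFiniteMeasure (Measure.map (qq μ) (volume.restrict (Ioc (0:ℝ) M))) :=
    Measure.isFiniteMeasure_map _ _
  apply MeasureTheory.Measure.ext_of_Iic
  intro a
  rw [Measure.map_apply (measurable_qq μ) measurableSet_Iic,
    Measure.map_apply hcoe measurableSet_Iic,
    Measure.restrict_apply (measurableSet_Iic.preimage (measurable_qq μ))]
  have hset : qq μ ⁻¹' (Iic a) ∩ Ioc 0 M = Ioc 0 (FF μ a) := by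
    ext s
    simp only [mem_inter_iff, mem_preimage, mem_Iic, mem_Ioc]
    constructor
    · rintro ⟨hqa, hs0, hsM⟩
      exact ⟨hs0, ((qq_galois μ ⟨hs0, hsM⟩ a).1 hqa)⟩
    · rintro ⟨hs0, hsF⟩
      have hsM : s ≤ M := hsF.trans (FF_le_tmass μ a)
      exact ⟨(qq_galois μ ⟨hs0, hsM⟩ a).2 hsF, hs0, hsM⟩
  rw [hset, Real.volume_Ioc, sub_zero]
  have : ((↑) : I → ℝ) ⁻¹' (Iic a) = {x : I | (x:ℝ) ≤ a} := rfl
  rw [this, FF]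
  exact ENNReal.ofReal_toReal (measure_ne_top μ _)

/-- slice of μ between quantile levels θ and θ+m -/
def slice (μ : Measure I) [IsFiniteMeasure μ] (θ m : ℝ) : Measure I :=
  Measure.map (Qmap μ) (volume.restrict (Ioc θ (θ+m)))

instance slice_finite (θ m : ℝ) : IsFiniteMeasure (slice μ θ m) := by
  unfold slice
  haveI : IsFiniteMeasure (volume.restrict (Ioc θ (θ+m))) :=
    ⟨by rw [Measure.restrict_apply_univ]; exact measure_Ioc_lt_top⟩
  exact Measure.isFiniteMeasure_map _ _

lemma slice_le {θ m : ℝ} (hθ : 0 ≤ θ) (hθm : θ + m ≤ tmass μ) : slice μ θ m ≤ μ := by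
  conv_rhs => rw [← map_Qmap_eq μ]
  exact Measure.map_mono
    (Measure.restrict_mono (Ioc_subset_Ioc hθ hθm) le_rfl) (measurable_Qmap μ)

lemma slice_univ (θ m : ℝ) : slice μ θ m univ = ENNReal.ofReal m := by
  unfold slice
  rw [Measure.map_apply (measurable_Qmap μ) MeasurableSet.univ]
  simp [Real.volume_Ioc]

lemma tmass_slice {θ m : ℝ} (hm : 0 ≤ m) : tmass (slice μ θ m) = m := by
  rw [tmass, slice_univ, ENNReal.toReal_ofReal hm]

lemma slice_integral (θ m : ℝ) (g : ℝ → ℝ) (hg : ContinuousOn g (Icc 0 1)) :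
    ∫ x, g (x:ℝ) ∂(slice μ θ m) = ∫ s in Ioc θ (θ+m), g (qq μ s) := by
  unfold slice
  have hc : Continuous fun x : I => g (x:ℝ) :=
    hg.comp_continuous continuous_subtype_val fun x => x.2
  rw [integral_map (measurable_Qmap μ).aemeasurable hc.aestronglyMeasurable]
  rfl

lemma μ_integral (g : ℝ → ℝ) (hg : ContinuousOn g (Icc 0 1)) :
    ∫ x, g (x:ℝ) ∂μ = ∫ s in Ioc 0 (tmass μ), g (qq μ s) := by
  have hc : Continuous fun x : I => g (x:ℝ) :=
    hg.comp_continuous continuous_subtype_val fun x => x.2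
  conv_lhs => rw [← map_Qmap_eq μ]
  rw [integral_map (measurable_Qmap μ).aemeasurable hc.aestronglyMeasurable]
  rfl

/-- the interval property of slices -/
lemma slice_restrict_eq {θ m : ℝ} (hθ : 0 ≤ θ) (hm : 0 ≤ m) (hθm : θ + m ≤ tmass μ) :
    (slice μ θ m).restrict {x : I | qq μ θ < (x:ℝ) ∧ (x:ℝ) < qq μ (θ+m)} =
      μ.restrict {x : I | qq μ θ < (x:ℝ) ∧ (x:ℝ) < qq μ (θ+m)} := by
  set S := {x : I | qq μ θ < (x:ℝ) ∧ (x:ℝ) < qq μ (θ+m)} with hS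
  have hSmeas : MeasurableSet S :=
    (measurableSet_lt measurable_const measurable_subtype_coe).inter
      (measurableSet_lt measurable_subtype_coe measurable_const)
  ext t ht
  rw [Measure.restrict_apply ht, Measure.restrict_apply ht]
  have htS : t ∩ S ⊆ S := inter_subset_right
  have htSm : MeasurableSet (t ∩ S) := ht.inter hSmeas
  conv_rhs => rw [← map_Qmap_eq μ]
  unfold slice
  rw [Measure.map_apply (measurable_Qmap μ) htSm, Measure.map_apply (measurable_Qmap μ) htSm,
    Measure.restrict_apply ((measurable_Qmap μ) htSm),
    Measure.restrict_apply ((measurable_Qmap μ) htSm)]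
  congr 1
  ext s
  simp only [mem_inter_iff, mem_preimage, mem_Ioc]
  constructor
  · rintro ⟨hmem, hs1, hs2⟩
    exact ⟨hmem, lt_of_le_of_lt hθ hs1, hs2.trans hθm⟩
  · rintro ⟨hmem, hs1, hs2⟩
    have hqs := (htS hmem)
    rw [hS] at hqs
    obtain ⟨hq1, hq2⟩ := hqs
    constructor
    · exact hmem
    constructor
    · by_contra hcon
      push_neg at hcon
      exact absurd (qq_mono μ hcon) (not_le.2 hq1)
    · by_contra hcon
      push_neg at hcon
      exact absurd (qq_mono μ hcon.le) (not_le.2 hq2)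

lemma slice_outside {θ m : ℝ} (hm : 0 ≤ m) :
    slice μ θ m {x : I | (x:ℝ) < qq μ θ ∨ qq μ (θ+m) < (x:ℝ)} = 0 := by
  unfold slice
  have hmeas : MeasurableSet {x : I | (x:ℝ) < qq μ θ ∨ qq μ (θ+m) < (x:ℝ)} :=
    (measurableSet_lt measurable_subtype_coe measurable_const).union
      (measurableSet_lt measurable_const measurable_subtype_coe)
  rw [Measure.map_apply (measurable_Qmap μ) hmeas, Measure.restrict_apply ((measurable_Qmap μ) hmeas)]
  have hempty : Qmap μ ⁻¹' {x : I | (x:ℝ) < qq μ θ ∨ qq μ (θ+m) < (x:ℝ)} ∩ Ioc θ (θ+m) = ∅ := by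
    ext s
    simp only [mem_inter_iff, mem_preimage, mem_setOf_eq, mem_Ioc, mem_empty_iff_false, iff_false]
    rintro ⟨(h | h), hs1, hs2⟩
    · exact absurd (qq_mono μ hs1.le) (not_le.2 h)
    · exact absurd (qq_mono μ hs2) (not_le.2 h)
  rw [hempty]
  exact measure_empty

lemma integrableOn_comp_qq {g : ℝ → ℝ} (hg : ContinuousOn g (Icc 0 1)) (a b : ℝ) :
    IntegrableOn (fun s => g (qq μ s)) (Ioc a b) volume := by
  haveI : IsFiniteMeasure (volume.restrict (Ioc a b)) :=
    ⟨by rw [Measure.restrict_apply_univ]; exact measure_Ioc_lt_top⟩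
  obtain ⟨C, hC⟩ := isCompact_Icc.exists_bound_of_continuousOn hg
  have hc : Continuous fun x : I => g (x:ℝ) :=
    hg.comp_continuous continuous_subtype_val fun x => x.2
  have hmeas : Measurable fun s => g (qq μ s) := hc.measurable.comp (measurable_Qmap μ)
  exact (integrable_const C).mono' hmeas.aestronglyMeasurable
    (ae_of_all _ fun s => hC _ (qq_mem_Icc μ s))

lemma intervalIntegrable_comp_qq {g : ℝ → ℝ} (hg : ContinuousOn g (Icc 0 1)) (a b : ℝ) :
    IntervalIntegrable (fun s => g (qq μ s)) volume a b :=
  ⟨integrableOn_comp_qq μ hg a b, integrableOn_comp_qq μ hg b a⟩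

lemma intervalIntegrable_qq (a b : ℝ) : IntervalIntegrable (qq μ) volume a b :=
  intervalIntegrable_comp_qq μ continuousOn_id a b

lemma integrableOn_qq (a b : ℝ) : IntegrableOn (fun s => qq μ s) (Ioc a b) volume :=
  integrableOn_comp_qq μ continuousOn_id a b

lemma continuous_bfun (m : ℝ) (hm : 0 ≤ m) :
    Continuous fun θ => ∫ s in Ioc θ (θ+m), qq μ s := by
  have hsplit : ∀ θ : ℝ, ∫ s in Ioc θ (θ+m), qq μ s =
      (∫ s in (0:ℝ)..(θ+m), qq μ s) - ∫ s in (0:ℝ)..θ, qq μ s := by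
    intro θ
    have hadd := intervalIntegral.integral_add_adjacent_intervals
      (intervalIntegrable_qq μ 0 θ) (intervalIntegrable_qq μ θ (θ+m))
    rw [← intervalIntegral.integral_of_le (by linarith : θ ≤ θ + m)]
    linarith
  have hlip : LipschitzWith 1 (fun θ => ∫ s in (0:ℝ)..θ, qq μ s) := by
    apply LipschitzWith.of_dist_le_mul
    intro x y
    rw [Real.dist_eq, Real.dist_eq]
    have hxy : (∫ s in (0:ℝ)..x, qq μ s) - ∫ s in (0:ℝ)..y, qq μ s
        = ∫ s in y..x, qq μ s := by
      have := intervalIntegral.integral_add_adjacent_intervals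
        (intervalIntegrable_qq μ 0 y) (intervalIntegrable_qq μ y x)
      linarith
    rw [hxy]
    have := intervalIntegral.norm_integral_le_of_norm_le_const
      (f := qq μ) (a := y) (b := x) (C := 1) (fun s _ => by
        rw [Real.norm_eq_abs, abs_le]
        exact ⟨by linarith [(qq_mem_Icc μ s).1], (qq_mem_Icc μ s).2⟩)
    simp only [Real.norm_eq_abs] at this
    simpa using this
  have h1 : Continuous fun θ : ℝ => ∫ s in (0:ℝ)..(θ+m), qq μ s :=
    hlip.continuous.comp (continuous_id.add continuous_const)
  have h2 : Continuous fun θ : ℝ => ∫ s in (0:ℝ)..θ, qq μ s := hlip.continuous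
  exact (h1.sub h2).congr (fun θ => (hsplit θ).symm)

end Quant


section Main

lemma ContinuousOn_min {f g : ℝ → ℝ} {s : Set ℝ} (hf : ContinuousOn f s)
    (hg : ContinuousOn g s) : ContinuousOn (fun x => min (f x) (g x)) s := by
  exact hf.inf hg

lemma le_of_div_le_div {a b t : ℝ} (ht : 0 < t) (h : a / t ≤ b / t) : a ≤ b := by
  have h2 := mul_le_mul_of_nonneg_right h ht.le
  rwa [div_mul_cancel₀ _ ht.ne', div_mul_cancel₀ _ ht.ne'] at h2

lemma neg_utop_conc (c : ℝ) : ConcaveOn ℝ (Icc 0 1) (fun x => -(max (x - c) 0)) := by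
  have h := ConcaveOn_min (concaveOn_affine c (-1)) (concaveOn_affine 0 0)
  have he : (fun x : ℝ => min (c + -1 * x) (0 + 0 * x)) = fun x : ℝ => -(max (x - c) 0) := by
    funext x
    rcases le_total (x - c) 0 with h1 | h1
    · rw [max_eq_right h1, min_eq_right (by linarith)]; ring
    · rw [max_eq_left h1, min_eq_left (by linarith)]; ring
  rwa [he] at h

lemma neg_ubot_conc (c : ℝ) : ConcaveOn ℝ (Icc 0 1) (fun x => -(max (c - x) 0)) := by
  have h := ConcaveOn_min (concaveOn_affine (-c) 1) (concaveOn_affine 0 0)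
  have he : (fun x : ℝ => min (-c + 1 * x) (0 + 0 * x)) = fun x : ℝ => -(max (c - x) 0) := by
    funext x
    rcases le_total (c - x) 0 with h1 | h1
    · rw [max_eq_right h1, min_eq_right (by linarith)]; ring
    · rw [max_eq_left h1, min_eq_left (by linarith)]; ring
  rwa [he] at h

/-- from Blackwell dominance, concave integrals compare -/
lemma BLE_int (μ μ' : Measure I) (hmass : tmass μ = tmass μ') (hpos : 0 < tmass μ)
    (hB : BLE μ' μ) {g : ℝ → ℝ} (hgc : ContinuousOn g (Icc (0:ℝ) 1))
    (hgcc : ConcaveOn ℝ (Icc (0:ℝ) 1) g) :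
    ∫ x, g (x:ℝ) ∂μ ≤ ∫ x, g (x:ℝ) ∂μ' := by
  have h := hB g hgc hgcc
  rw [← hmass] at h
  exact le_of_div_le_div hpos h

/-- Jensen's inequality for the barycenter -/
lemma jensen_bary (ν : Measure I) [IsFiniteMeasure ν] (hpos : 0 < tmass ν)
    {h : ℝ → ℝ} (hc : ContinuousOn h (Icc (0:ℝ) 1)) (hcc : ConcaveOn ℝ (Icc (0:ℝ) 1) h) :
    ∫ x, h (x:ℝ) ∂ν ≤ tmass ν * h (bary ν) := by
  set P : Measure I := (ENNReal.ofReal (tmass ν))⁻¹ • ν with hP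
  haveI : IsProbabilityMeasure P := ⟨by
    rw [hP, Measure.smul_apply, univ_eq_ofReal ν, smul_eq_mul]
    exact ENNReal.inv_mul_cancel (ENNReal.ofReal_pos.2 hpos).ne' ENNReal.ofReal_ne_top⟩
  have hPt : ((ENNReal.ofReal (tmass ν))⁻¹).toReal = (tmass ν)⁻¹ := by
    rw [ENNReal.toReal_inv, ENNReal.toReal_ofReal hpos.le]
  have hPint : ∀ g : I → ℝ, ∫ x, g x ∂P = (tmass ν)⁻¹ * ∫ x, g x ∂ν := by
    intro g
    rw [hP, integral_smul_measure' _ ν g, hPt]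
  have hbaryP : ∫ x, (x:ℝ) ∂P = bary ν := by
    rw [hPint, bary, intg, div_eq_inv_mul]
  have hj := hcc.le_map_integral hc isClosed_Icc
    (ae_of_all _ fun x : I => x.2) (integrable_coe P) (integrable_cf hc P)
  rw [hbaryP] at hj
  have h2 : ∫ x, h (x:ℝ) ∂P = (tmass ν)⁻¹ * ∫ x, h (x:ℝ) ∂ν := hPint _
  rw [h2] at hj
  calc ∫ x, h (x:ℝ) ∂ν = tmass ν * ((tmass ν)⁻¹ * ∫ x, h (x:ℝ) ∂ν) := by
        field_simp
    _ ≤ tmass ν * h (bary ν) := by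
        exact mul_le_mul_of_nonneg_left hj hpos.le

lemma bary_smul (c : ℝ≥0∞) (hc : c ≠ 0) (hc' : c ≠ ⊤) (ρ : Measure I) :
    bary (c • ρ) = bary ρ := by
  rw [bary, bary, intg, intg, integral_smul_measure' c ρ, tmass_smul,
    mul_div_mul_left _ _ (ENNReal.toReal_pos hc hc').ne']

/-- Hardy–Littlewood style upper endpoint bound -/
lemma hl_top (l : ℝ) (μ μ' ν' : Measure I) [IsFiniteMeasure μ] [IsFiniteMeasure μ']
    (hmass : tmass μ = tmass μ') (hpos : 0 < tmass μ) (hB : BLE μ' μ)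
    (hν'le : ν' ≤ μ') (hν'pos : 0 < tmass ν') (hν'lt : tmass ν' < tmass μ')
    (hν'bar : bary ν' = l) :
    l * tmass ν' ≤ ∫ s in Ioc (tmass μ - tmass ν') (tmass μ), qq μ s := by
  haveI : IsFiniteMeasure ν' := isFiniteMeasure_of_le μ' hν'le
  have hm : 0 < tmass ν' := hν'pos
  have hmM : tmass ν' < tmass μ := by rw [hmass]; exact hν'lt
  have hintν' : intg ν' = l * tmass ν' := by
    rw [← hν'bar, bary]; field_simp
  set c := qq μ (tmass μ - tmass ν') with hcdef
  have hcont : ContinuousOn (fun x : ℝ => max (x - c) 0) (Icc (0:ℝ) 1) := by fun_prop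
  have h1 : intg ν' ≤ c * tmass ν' + ∫ x, max ((x:ℝ) - c) 0 ∂ν' := by
    have hint : Integrable (fun x : I => c + max ((x:ℝ) - c) 0) ν' := by
      have hc2 : ContinuousOn (fun x : ℝ => c + max (x - c) 0) (Icc (0:ℝ) 1) := by fun_prop
      exact integrable_cf hc2 ν'
    have hmono := integral_mono (integrable_coe ν') hint
      (fun x => by
        have := le_max_left ((x:ℝ) - c) (0:ℝ); simp only; linarith)
    rw [integral_add (integrable_const c) (integrable_cf hcont ν'), integral_const,
      smul_eq_mul] at hmono
    unfold intg
    have : ν'.real univ = tmass ν' := rfl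
    rw [this] at hmono
    linarith
  have h2 : ∫ x, max ((x:ℝ) - c) 0 ∂ν' ≤ ∫ x, max ((x:ℝ) - c) 0 ∂μ' :=
    integral_mono_measure hν'le (ae_of_all _ fun x => le_max_right _ _)
      (integrable_cf hcont μ')
  have h3 : ∫ x, max ((x:ℝ) - c) 0 ∂μ' ≤ ∫ x, max ((x:ℝ) - c) 0 ∂μ := by
    have hneg := BLE_int μ μ' hmass hpos hB
      (g := fun x => -(max (x - c) 0)) (by fun_prop) (neg_utop_conc c)
    rw [integral_neg, integral_neg] at hneg
    linarith
  have h4 : ∫ x, max ((x:ℝ) - c) 0 ∂μ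
      = ∫ s in Ioc 0 (tmass μ), max (qq μ s - c) 0 :=
    μ_integral μ _ hcont
  have hsum : ∫ s in Ioc 0 (tmass μ), max (qq μ s - c) 0
      = (∫ s in Ioc 0 (tmass μ - tmass ν'), max (qq μ s - c) 0)
        + ∫ s in Ioc (tmass μ - tmass ν') (tmass μ), max (qq μ s - c) 0 := by
    rw [← setIntegral_union (Ioc_disjoint_Ioc_of_le le_rfl) measurableSet_Ioc
      (integrableOn_comp_qq μ hcont _ _) (integrableOn_comp_qq μ hcont _ _),
      Ioc_union_Ioc_eq_Ioc (by linarith) (by linarith)]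
  have hzero : ∫ s in Ioc 0 (tmass μ - tmass ν'), max (qq μ s - c) 0 = 0 := by
    rw [setIntegral_congr_fun measurableSet_Ioc (g := fun _ => (0:ℝ))
      (fun s hs => max_eq_right (by linarith [qq_mono μ hs.2]))]
    simp
  have hlin : ∫ s in Ioc (tmass μ - tmass ν') (tmass μ), max (qq μ s - c) 0
      = (∫ s in Ioc (tmass μ - tmass ν') (tmass μ), qq μ s) - tmass ν' * c := by
    rw [setIntegral_congr_fun measurableSet_Ioc (g := fun s => qq μ s - c)
      (fun s hs => max_eq_left (by linarith [qq_mono μ hs.1.le])),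
      integral_sub (integrableOn_qq μ _ _)
        (integrableOn_const measure_Ioc_lt_top.ne),
      setIntegral_const, measureReal_def, Real.volume_Ioc, ENNReal.toReal_ofReal (by linarith), smul_eq_mul]
    ring
  linarith

/-- Hardy–Littlewood style lower endpoint bound -/
lemma hl_bot (l : ℝ) (μ μ' ν' : Measure I) [IsFiniteMeasure μ] [IsFiniteMeasure μ']
    (hmass : tmass μ = tmass μ') (hpos : 0 < tmass μ) (hB : BLE μ' μ)
    (hν'le : ν' ≤ μ') (hν'pos : 0 < tmass ν') (hν'lt : tmass ν' < tmass μ')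
    (hν'bar : bary ν' = l) :
    ∫ s in Ioc 0 (tmass ν'), qq μ s ≤ l * tmass ν' := by
  haveI : IsFiniteMeasure ν' := isFiniteMeasure_of_le μ' hν'le
  have hm : 0 < tmass ν' := hν'pos
  have hmM : tmass ν' < tmass μ := by rw [hmass]; exact hν'lt
  have hintν' : intg ν' = l * tmass ν' := by
    rw [← hν'bar, bary]; field_simp
  set c := qq μ (tmass ν') with hcdef
  have hcont : ContinuousOn (fun x : ℝ => max (c - x) 0) (Icc (0:ℝ) 1) := by fun_prop
  have h1 : c * tmass ν' - ∫ x, max (c - (x:ℝ)) 0 ∂ν' ≤ intg ν' := by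
    have hint : Integrable (fun x : I => c - max (c - (x:ℝ)) 0) ν' := by
      have hc2 : ContinuousOn (fun x : ℝ => c - max (c - x) 0) (Icc (0:ℝ) 1) := by fun_prop
      exact integrable_cf hc2 ν'
    have hmono := integral_mono hint (integrable_coe ν')
      (fun x => by
        have := le_max_left (c - (x:ℝ)) (0:ℝ); simp only; linarith)
    rw [integral_sub (integrable_const c) (integrable_cf hcont ν'), integral_const,
      smul_eq_mul] at hmono
    unfold intg
    have : ν'.real univ = tmass ν' := rfl
    rw [this] at hmono
    linarith
  have h2 : ∫ x, max (c - (x:ℝ)) 0 ∂ν' ≤ ∫ x, max (c - (x:ℝ)) 0 ∂μ' :=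
    integral_mono_measure hν'le (ae_of_all _ fun x => le_max_right _ _)
      (integrable_cf hcont μ')
  have h3 : ∫ x, max (c - (x:ℝ)) 0 ∂μ' ≤ ∫ x, max (c - (x:ℝ)) 0 ∂μ := by
    have hneg := BLE_int μ μ' hmass hpos hB
      (g := fun x => -(max (c - x) 0)) (by fun_prop) (neg_ubot_conc c)
    rw [integral_neg, integral_neg] at hneg
    linarith
  have h4 : ∫ x, max (c - (x:ℝ)) 0 ∂μ
      = ∫ s in Ioc 0 (tmass μ), max (c - qq μ s) 0 :=
    μ_integral μ _ hcont
  have hsum : ∫ s in Ioc 0 (tmass μ), max (c - qq μ s) 0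
      = (∫ s in Ioc 0 (tmass ν'), max (c - qq μ s) 0)
        + ∫ s in Ioc (tmass ν') (tmass μ), max (c - qq μ s) 0 := by
    rw [← setIntegral_union (Ioc_disjoint_Ioc_of_le le_rfl) measurableSet_Ioc
      (integrableOn_comp_qq μ hcont _ _) (integrableOn_comp_qq μ hcont _ _),
      Ioc_union_Ioc_eq_Ioc (by linarith) (by linarith)]
  have hzero : ∫ s in Ioc (tmass ν') (tmass μ), max (c - qq μ s) 0 = 0 := by
    rw [setIntegral_congr_fun measurableSet_Ioc (g := fun _ => (0:ℝ))
      (fun s hs => max_eq_right (by linarith [qq_mono μ hs.1.le]))]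
    simp
  have hlin : ∫ s in Ioc 0 (tmass ν'), max (c - qq μ s) 0
      = tmass ν' * c - ∫ s in Ioc 0 (tmass ν'), qq μ s := by
    rw [setIntegral_congr_fun measurableSet_Ioc (g := fun s => c - qq μ s)
      (fun s hs => max_eq_left (by linarith [qq_mono μ hs.2])),
      integral_sub (integrableOn_const (C := c) measure_Ioc_lt_top.ne)
        (integrableOn_qq μ _ _),
      setIntegral_const, measureReal_def, Real.volume_Ioc, ENNReal.toReal_ofReal (by linarith), smul_eq_mul]
    ring
  linarith

end Main

/-- one-step induction lemma for Blackwell order preserving kernels. -/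
theorem interval_step_blackwell
    (l : ℝ) (hl : l ∈ Set.Ioo (0:ℝ) 1)
    (K : ProbKernel) (hK : BlackwellPreserving K)
    (μ μ' : Measure I) [IsFiniteMeasure μ] [IsFiniteMeasure μ']
    (hmass : tmass μ = tmass μ') (hpos : 0 < tmass μ)
    (hbar : bary μ = bary μ') (hB : BLE μ' μ)
    (ν' : Measure I) (hν'le : ν' ≤ μ')
    (hν'pos : 0 < tmass ν') (hν'lt : tmass ν' < tmass μ') (hν'bar : bary ν' = l) :
    ∃ ν : Measure I, IsIntervalMeasure l μ ν ∧ tmass ν = tmass ν' ∧ bary ν = l ∧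
      BLE (push K (μ' - ν')) (push K (μ - ν)) := by
  haveI : IsFiniteMeasure ν' := isFiniteMeasure_of_le μ' hν'le
  haveI hfinsub : IsFiniteMeasure (μ - slice μ 0 0) := isFiniteMeasure_of_le μ Measure.sub_le
  have hmpos : 0 < tmass ν' := hν'pos
  have hmM : tmass ν' < tmass μ := by rw [hmass]; exact hν'lt
  have hintν' : intg ν' = l * tmass ν' := by
    rw [← hν'bar, bary]; field_simp
  -- intermediate value theorem to find the slice level θ
  have hbcont : Continuous fun θ : ℝ => ∫ s in Ioc θ (θ + tmass ν'), qq μ s :=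
    continuous_bfun μ _ hmpos.le
  have hbot := hl_bot l μ μ' ν' hmass hpos hB hν'le hν'pos hν'lt hν'bar
  have htop := hl_top l μ μ' ν' hmass hpos hB hν'le hν'pos hν'lt hν'bar
  have hIVT := intermediate_value_Icc (by linarith : (0:ℝ) ≤ tmass μ - tmass ν')
    hbcont.continuousOn
  have hmem : l * tmass ν' ∈
      Icc (∫ s in Ioc (0:ℝ) (0 + tmass ν'), qq μ s)
        (∫ s in Ioc (tmass μ - tmass ν') (tmass μ - tmass ν' + tmass ν'), qq μ s) := by
    constructor
    · rw [zero_add]; exact hbot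
    · rw [sub_add_cancel]; exact htop
  obtain ⟨θ, hθmem, hbθ⟩ := hIVT hmem
  replace hbθ : ∫ s in Ioc θ (θ + tmass ν'), qq μ s = l * tmass ν' := hbθ
  have hθ0 : 0 ≤ θ := hθmem.1
  have hθM : θ + tmass ν' ≤ tmass μ := by linarith [hθmem.2]
  -- the candidate interval measure
  set ν : Measure I := slice μ θ (tmass ν') with hνdef
  set y₁ : ℝ := qq μ θ with hy₁def
  set y₂ : ℝ := qq μ (θ + tmass ν') with hy₂def
  have hνle : ν ≤ μ := slice_le μ hθ0 hθM
  have hνmass : tmass ν = tmass ν' := tmass_slice μ hmpos.le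
  have hνint : intg ν = l * tmass ν' := by
    rw [intg, hνdef, slice_integral μ θ (tmass ν') (fun x => x) continuousOn_id]
    exact hbθ
  have hνbary : bary ν = l := by
    rw [bary, hνint, hνmass]; field_simp
  have hy12 : y₁ ≤ y₂ := qq_mono μ (by linarith)
  have hy₁mem : y₁ ∈ Icc (0:ℝ) 1 := qq_mem_Icc μ θ
  have hy₂mem : y₂ ∈ Icc (0:ℝ) 1 := qq_mem_Icc μ (θ + tmass ν')
  -- l lies in [y₁, y₂]
  have hvol : volume.real (Ioc θ (θ + tmass ν')) = tmass ν' := by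
    rw [measureReal_def, Real.volume_Ioc, ENNReal.toReal_ofReal (by linarith)]
    ring
  have hlow : y₁ * tmass ν' ≤ l * tmass ν' := by
    have hmono := setIntegral_mono_on (integrableOn_const measure_Ioc_lt_top.ne)
      (integrableOn_qq μ θ (θ + tmass ν')) measurableSet_Ioc
      (fun s hs => qq_mono μ hs.1.le)
    rw [setIntegral_const, smul_eq_mul, hvol, hbθ] at hmono
    linarith [hmono]
  have hhigh : l * tmass ν' ≤ y₂ * tmass ν' := by
    have hmono := setIntegral_mono_on
      (integrableOn_qq μ θ (θ + tmass ν'))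
      (integrableOn_const measure_Ioc_lt_top.ne) measurableSet_Ioc
      (fun s hs => qq_mono μ hs.2)
    rw [setIntegral_const, smul_eq_mul, hvol, hbθ] at hmono
    linarith [hmono]
  have hly₁ : y₁ ≤ l := le_of_mul_le_mul_right (by linarith) hmpos
  have hly₂ : l ≤ y₂ := le_of_mul_le_mul_right (by linarith) hmpos
  -- the set where ν = μ
  set S : Set I := {x : I | y₁ < (x:ℝ) ∧ (x:ℝ) < y₂} with hSdef
  have hSmeas : MeasurableSet S :=
    (measurableSet_lt measurable_const measurable_subtype_coe).inter
      (measurableSet_lt measurable_subtype_coe measurable_const)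
  have hrestr : ν.restrict S = μ.restrict S := slice_restrict_eq μ hθ0 hmpos.le hθM
  have houts : ν {x : I | (x:ℝ) < y₁ ∨ y₂ < (x:ℝ)} = 0 := slice_outside μ hmpos.le
  have hνS : ν S = μ S := by
    rw [← Measure.restrict_apply_univ, ← Measure.restrict_apply_univ (μ := μ), hrestr]
  have hμνS : (μ - ν) S = 0 := by
    rw [Measure.sub_apply hSmeas hνle, hνS, tsub_self]
  haveI hfin1 : IsFiniteMeasure (μ - ν) := isFiniteMeasure_of_le μ Measure.sub_le
  haveI hfin2 : IsFiniteMeasure (μ' - ν') := isFiniteMeasure_of_le μ' Measure.sub_le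
  -- the core comparison
  have hcore : ∀ f : ℝ → ℝ, ContinuousOn f (Icc (0:ℝ) 1) → ConcaveOn ℝ (Icc (0:ℝ) 1) f →
      ∫ x, f (x:ℝ) ∂(μ - ν) ≤ ∫ x, f (x:ℝ) ∂(μ' - ν') := by
    intro f hfc hfcc
    have chain : ∀ h : ℝ → ℝ, ContinuousOn h (Icc (0:ℝ) 1) → ConcaveOn ℝ (Icc (0:ℝ) 1) h →
        (∀ x ∈ Icc (0:ℝ) 1, h x ≤ f x) →
        (∀ x : I, x ∉ S → h (x:ℝ) = f (x:ℝ)) →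
        (∫ x, h (x:ℝ) ∂ν = tmass ν' * h l) →
        ∫ x, f (x:ℝ) ∂(μ - ν) ≤ ∫ x, f (x:ℝ) ∂(μ' - ν') := by
      intro h hhc hhcc hhle hoff hhν
      have hae : (fun x : I => f (x:ℝ)) =ᵐ[μ - ν] fun x : I => h (x:ℝ) := by
        rw [Filter.EventuallyEq, ae_iff]
        refine measure_mono_null ?_ hμνS
        intro x hx
        by_contra hxS
        exact hx (hoff x (fun hmem => hxS hmem)).symm
      have hjen := jensen_bary ν' hν'pos hhc hhcc
      rw [hν'bar] at hjen
      calc ∫ x, f (x:ℝ) ∂(μ - ν) = ∫ x, h (x:ℝ) ∂(μ - ν) := integral_congr_ae hae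
        _ = (∫ x, h (x:ℝ) ∂μ) - ∫ x, h (x:ℝ) ∂ν :=
            integral_sub_measure μ ν hνle _ (integrable_cf hhc μ)
        _ ≤ (∫ x, h (x:ℝ) ∂μ') - ∫ x, h (x:ℝ) ∂ν := by
            linarith [BLE_int μ μ' hmass hpos hB hhc hhcc]
        _ = (∫ x, h (x:ℝ) ∂μ') - tmass ν' * h l := by rw [hhν]
        _ ≤ (∫ x, h (x:ℝ) ∂μ') - ∫ x, h (x:ℝ) ∂ν' := by linarith
        _ = ∫ x, h (x:ℝ) ∂(μ' - ν') :=
            (integral_sub_measure μ' ν' hν'le _ (integrable_cf hhc μ')).symm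
        _ ≤ ∫ x, f (x:ℝ) ∂(μ' - ν') :=
            integral_mono (integrable_cf hhc _) (integrable_cf hfc _)
              (fun x => hhle (x:ℝ) x.2)
    by_cases hy : y₁ < y₂
    · -- chord case
      set q : ℝ := (f y₂ - f y₁) / (y₂ - y₁) with hqdef
      have hchordeq : ∀ x : ℝ, chord f y₁ y₂ x = f y₁ + q * (x - y₁) := fun x => rfl
      refine chain (fun x => min (f x) (chord f y₁ y₂ x))
        (ContinuousOn_min hfc (chord_continuous f y₁ y₂).continuousOn)
        (ConcaveOn_min hfcc (chord_concave f y₁ y₂))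
        (fun x _ => min_le_left _ _) ?_ ?_
      · intro x hxS
        simp only [hSdef, mem_setOf_eq, not_and, not_lt] at hxS
        rcases le_or_gt (x:ℝ) y₁ with hx1 | hx1
        · exact min_eq_left (le_chord_left hfcc hy₂mem x.2 hy hx1)
        · exact min_eq_left (le_chord_right hfcc hy₁mem x.2 hy (hxS hx1))
      · have hhc : ContinuousOn (fun x => min (f x) (chord f y₁ y₂ x)) (Icc (0:ℝ) 1) :=
          ContinuousOn_min hfc (chord_continuous f y₁ y₂).continuousOn
        rw [hνdef, slice_integral μ θ (tmass ν') _ hhc]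
        show _ = tmass ν' * min (f l) (chord f y₁ y₂ l)
        have hins : ∀ s ∈ Ioc θ (θ + tmass ν'),
            min (f (qq μ s)) (chord f y₁ y₂ (qq μ s)) = (f y₁ - q * y₁) + q * qq μ s := by
          intro s hs
          have h1 : y₁ ≤ qq μ s := qq_mono μ hs.1.le
          have h2 : qq μ s ≤ y₂ := qq_mono μ hs.2
          rw [min_eq_right (chord_le_inside hfcc hy₁mem hy₂mem hy h1 h2), hchordeq]
          ring
        rw [setIntegral_congr_fun measurableSet_Ioc hins,
          integral_add (integrableOn_const (C := f y₁ - q * y₁) measure_Ioc_lt_top.ne)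
            ((integrableOn_qq μ _ _).const_mul q),
          setIntegral_const, smul_eq_mul, hvol, integral_const_mul, hbθ]
        have hminl : min (f l) (chord f y₁ y₂ l) = f y₁ + q * (l - y₁) := by
          rw [min_eq_right (chord_le_inside hfcc hy₁mem hy₂mem hy hly₁ hly₂), hchordeq]
        rw [hminl]
        ring
    · -- degenerate case : y₁ = y₂, the slice is a point mass at l
      have hyeq : y₁ = y₂ := le_antisymm hy12 (not_lt.1 hy)
      have hly : l = y₁ := le_antisymm (hyeq ▸ hly₂) hly₁
      refine chain f hfc hfcc (fun x _ => le_rfl) (fun x _ => rfl) ?_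
      rw [hνdef, slice_integral μ θ (tmass ν') _ hfc]
      have hins : ∀ s ∈ Ioc θ (θ + tmass ν'), f (qq μ s) = f l := by
        intro s hs
        have h1 : y₁ ≤ qq μ s := qq_mono μ hs.1.le
        have h2 : qq μ s ≤ y₂ := qq_mono μ hs.2
        have : qq μ s = l := by rw [hly]; linarith [hyeq]
        rw [this]
      rw [setIntegral_congr_fun measurableSet_Ioc hins, setIntegral_const, smul_eq_mul, hvol]
  -- Blackwell comparison of the residuals
  have hBLEsub : BLE (μ' - ν') (μ - ν) := by
    intro f hfc hfcc
    have h1 : tmass (μ - ν) = tmass μ - tmass ν' := by rw [tmass_sub μ ν hνle, hνmass]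
    have h2 : tmass (μ' - ν') = tmass μ - tmass ν' := by rw [tmass_sub μ' ν' hν'le, ← hmass]
    rw [h1, h2]
    have hr : 0 < tmass μ - tmass ν' := by linarith
    exact (div_le_div_iff_of_pos_right hr).2 (hcore f hfc hfcc)
  -- normalize and push through the kernel
  have hrpos : 0 < tmass μ - tmass ν' := by linarith
  set c : ℝ≥0∞ := (ENNReal.ofReal (tmass μ - tmass ν'))⁻¹ with hcdef
  have hc0 : c ≠ 0 := ENNReal.inv_ne_zero.2 ENNReal.ofReal_ne_top
  have hctop : c ≠ ⊤ := by
    rw [hcdef, Ne, ENNReal.inv_eq_top]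
    exact (ENNReal.ofReal_pos.2 hrpos).ne'
  have huniv1 : (μ - ν) univ = ENNReal.ofReal (tmass μ - tmass ν') := by
    rw [univ_eq_ofReal, tmass_sub μ ν hνle, hνmass]
  have huniv2 : (μ' - ν') univ = ENNReal.ofReal (tmass μ - tmass ν') := by
    rw [univ_eq_ofReal, tmass_sub μ' ν' hν'le, ← hmass]
  haveI hp1 : IsProbabilityMeasure (c • (μ - ν)) := ⟨by
    rw [Measure.smul_apply, huniv1, smul_eq_mul, hcdef]
    exact ENNReal.inv_mul_cancel (ENNReal.ofReal_pos.2 hrpos).ne' ENNReal.ofReal_ne_top⟩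
  haveI hp2 : IsProbabilityMeasure (c • (μ' - ν')) := ⟨by
    rw [Measure.smul_apply, huniv2, smul_eq_mul, hcdef]
    exact ENNReal.inv_mul_cancel (ENNReal.ofReal_pos.2 hrpos).ne' ENNReal.ofReal_ne_top⟩
  have hintμ : intg μ = intg μ' := by
    have hb2 := hbar
    rw [bary, bary, ← hmass] at hb2
    rw [div_eq_div_iff hpos.ne' hpos.ne'] at hb2
    exact mul_right_cancel₀ (ne_of_gt hpos) hb2
  have hintsub1 : intg (μ - ν) = intg μ - l * tmass ν' := by
    rw [intg, integral_sub_measure μ ν hνle _ (integrable_coe μ)]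
    rw [← hνint]; rfl
  have hintsub2 : intg (μ' - ν') = intg μ - l * tmass ν' := by
    rw [intg, integral_sub_measure μ' ν' hν'le _ (integrable_coe μ')]
    rw [← hintν', hintμ]; rfl
  have hbary12 : bary (c • (μ' - ν')) = bary (c • (μ - ν)) := by
    rw [bary_smul c hc0 hctop, bary_smul c hc0 hctop, bary, bary, hintsub1, hintsub2,
      tmass_sub μ ν hνle, tmass_sub μ' ν' hν'le, hνmass, ← hmass]
  have hble12 : BLE (c • (μ' - ν')) (c • (μ - ν)) := BLE_smul c hc0 hctop hBLEsub
  have hres := hK _ _ hp2 hp1 hbary12 hble12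
  rw [push_smul, push_smul] at hres
  have hfinal := BLE_smul c⁻¹ (ENNReal.inv_ne_zero.2 hctop)
    (by rw [Ne, ENNReal.inv_eq_top]; exact hc0) hres
  rw [smul_smul, smul_smul, ENNReal.inv_mul_cancel hc0 hctop, one_smul, one_smul] at hfinal
  exact ⟨ν, ⟨hνle, hνbary, y₁, y₂, hy₁mem.1, hy12, hy₂mem.2, hrestr, houts⟩,
    hνmass, hνbary, hfinal⟩


end Persuasion
end
end

section
/- Let S be a standard Borel space and let G₀, G₁ be probability measures on S. For y ∈ [0,1] let m_y := (1−y)·G₀ + y·G₁ and let p_y : S → [0,1] be the posterior function p_y := y·(dG₁/dm_y) (a version of the Radon–Nikodym density, which takes values in [0,1] m_y-almost surely), and define σ(y) to be the pushforward of m_y under p_y. Then σ is a probability kernel on [0,1] (i.e., the barycenter of σ(y) equals y for every y), and σ is Blackwell order preserving. -/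
open MeasureTheory Set
open scoped ENNReal unitInterval Classical

noncomputable section

namespace Persuasion

/-- The perspective function of `f`. -/
def psi (f : ℝ → ℝ) (a b : ℝ) : ℝ := (a + b) * f (b / (a + b))

lemma psi_ratio_mem {a b : ℝ} (ha : 0 ≤ a) (hb : 0 ≤ b) : b / (a + b) ∈ Icc (0:ℝ) 1 := by
  rcases eq_or_lt_of_le (add_nonneg ha hb) with h | h
  · simp [← h]
  · exact ⟨div_nonneg hb (add_nonneg ha hb), div_le_one_of_le₀ (by linarith) h.le⟩

lemma psi_smul (f : ℝ → ℝ) {t : ℝ} (ht : 0 ≤ t) (a b : ℝ) :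
    psi f (t * a) (t * b) = t * psi f a b := by
  rcases eq_or_lt_of_le ht with h | h
  · simp [psi, ← h]
  · unfold psi
    rw [← mul_add, mul_div_mul_left _ _ h.ne']
    ring

lemma psi_abs_le (f : ℝ → ℝ) {M : ℝ} (hM : ∀ x ∈ Icc (0:ℝ) 1, |f x| ≤ M)
    {a b : ℝ} (ha : 0 ≤ a) (hb : 0 ≤ b) : |psi f a b| ≤ (a + b) * M := by
  unfold psi
  rw [abs_mul, abs_of_nonneg (add_nonneg ha hb)]
  exact mul_le_mul_of_nonneg_left (hM _ (psi_ratio_mem ha hb)) (add_nonneg ha hb)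

lemma psi_superadd (f : ℝ → ℝ) (hf : ConcaveOn ℝ (Icc (0:ℝ) 1) f)
    {a b a' b' : ℝ} (ha : 0 ≤ a) (hb : 0 ≤ b) (ha' : 0 ≤ a') (hb' : 0 ≤ b') :
    psi f a b + psi f a' b' ≤ psi f (a + a') (b + b') := by
  set d := a + b with hd
  set d' := a' + b' with hd'
  rcases eq_or_lt_of_le (add_nonneg ha hb) with h0 | h0
  · have hA : a = 0 := by linarith [hb]
    have hB : b = 0 := by linarith [ha]
    simp [psi, hA, hB]
  rcases eq_or_lt_of_le (add_nonneg ha' hb') with h0' | h0'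
  · have hA : a' = 0 := by linarith [hb']
    have hB : b' = 0 := by linarith [ha']
    simp [psi, hA, hB]
  -- both positive
  have hD : 0 < d + d' := by positivity
  have hmem : b / d ∈ Icc (0:ℝ) 1 := psi_ratio_mem ha hb
  have hmem' : b' / d' ∈ Icc (0:ℝ) 1 := psi_ratio_mem ha' hb'
  have hkey := hf.2 hmem hmem'
    (div_nonneg h0.le hD.le : (0:ℝ) ≤ d / (d + d'))
    (div_nonneg h0'.le hD.le : (0:ℝ) ≤ d' / (d + d'))
    (by field_simp)
  have hdne : d ≠ 0 := h0.ne'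
  have hdne' : d' ≠ 0 := h0'.ne'
  have hDne : d + d' ≠ 0 := hD.ne'
  have harg : (d / (d + d')) • (b / d) + (d' / (d + d')) • (b' / d')
      = (b + b') / (d + d') := by
    simp only [smul_eq_mul]
    field_simp
  rw [harg] at hkey
  have hmul := mul_le_mul_of_nonneg_left hkey hD.le
  unfold psi
  have hrw : (a + a') + (b + b') = d + d' := by rw [hd, hd']; ring
  rw [hrw]
  calc d * f (b / d) + d' * f (b' / d')
      = (d + d') * ((d / (d + d')) • f (b / d) + (d' / (d + d')) • f (b' / d')) := by
        simp only [smul_eq_mul]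
        field_simp
    _ ≤ (d + d') * f ((b + b') / (d + d')) := hmul

lemma measurable_psi_comp {S : Type*} [MeasurableSpace S] {f : ℝ → ℝ}
    (hf : ContinuousOn f (Icc (0:ℝ) 1)) {a b : S → ℝ} (ha : Measurable a) (hb : Measurable b)
    (ha0 : ∀ s, 0 ≤ a s) (hb0 : ∀ s, 0 ≤ b s) :
    Measurable fun s => psi f (a s) (b s) := by
  have hr : ∀ s, b s / (a s + b s) ∈ Icc (0:ℝ) 1 := fun s => psi_ratio_mem (ha0 s) (hb0 s)
  have hcont : Continuous ((Icc (0:ℝ) 1).restrict f) :=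
    continuousOn_iff_continuous_restrict.mp hf
  have hfr : Measurable fun s => f (b s / (a s + b s)) := by
    have : (fun s => f (b s / (a s + b s)))
        = (Icc (0:ℝ) 1).restrict f ∘ fun s => (⟨b s / (a s + b s), hr s⟩ : Icc (0:ℝ) 1) := rfl
    rw [this]
    exact hcont.measurable.comp ((hb.div (ha.add hb)).subtype_mk)
  exact (ha.add hb).mul hfr

lemma psi_contOn {f : ℝ → ℝ} (hf : ContinuousOn f (Icc (0:ℝ) 1)) {M : ℝ}
    (hM : ∀ x ∈ Icc (0:ℝ) 1, |f x| ≤ M) {u v : ℝ} (hu : 0 ≤ u) (hv : 0 ≤ v) :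
    ContinuousOn (fun y => psi f ((1 - y) * u) (y * v)) (Icc (0:ℝ) 1) := by
  intro y₀ hy₀
  set d : ℝ → ℝ := fun y => (1 - y) * u + y * v with hd_def
  have hdcont : Continuous d := by continuity
  have hM0 : 0 ≤ M := le_trans (abs_nonneg _) (hM 0 (by norm_num))
  by_cases hd0 : d y₀ = 0
  · -- value is 0 and the function tends to 0
    have hval : psi f ((1 - y₀) * u) (y₀ * v) = 0 := by
      unfold psi; rw [show (1 - y₀) * u + y₀ * v = d y₀ from rfl, hd0, zero_mul]
    have key : Filter.Tendsto (fun y => psi f ((1 - y) * u) (y * v))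
        (nhdsWithin y₀ (Icc (0:ℝ) 1)) (nhds 0) := by
      apply squeeze_zero_norm' (a := fun y => d y * M)
      · filter_upwards [self_mem_nhdsWithin] with y hy
        have h1 : (0:ℝ) ≤ 1 - y := by simp only [mem_Icc] at hy; linarith [hy.2]
        have h2 : (0:ℝ) ≤ y := by simp only [mem_Icc] at hy; exact hy.1
        exact psi_abs_le f hM (mul_nonneg h1 hu) (mul_nonneg h2 hv)
      · have h := (hdcont.continuousWithinAt (s := Icc (0:ℝ) 1) (x := y₀)).mul
          (continuousWithinAt_const (b := M))
        have : Filter.Tendsto (fun y => d y * M) (nhdsWithin y₀ (Icc (0:ℝ) 1))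
            (nhds (d y₀ * M)) := h
        rw [hd0, zero_mul] at this
        exact this
    simpa [ContinuousWithinAt, hval] using key
  · -- denominator positive at y₀
    have hr_mem : ∀ y ∈ Icc (0:ℝ) 1, y * v / ((1 - y) * u + y * v) ∈ Icc (0:ℝ) 1 := by
      intro y hy
      simp only [mem_Icc] at hy
      exact psi_ratio_mem (mul_nonneg (by linarith [hy.2]) hu) (mul_nonneg hy.1 hv)
    have hr_cwa : ContinuousWithinAt (fun y => y * v / d y) (Icc (0:ℝ) 1) y₀ :=
      (((continuous_id.mul continuous_const).continuousAt).div hdcont.continuousAt hd0).continuousWithinAt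
    have hf_cwa : ContinuousWithinAt (fun y => f (y * v / d y)) (Icc (0:ℝ) 1) y₀ :=
      ContinuousWithinAt.comp (f := fun y => y * v / d y) (g := f)
        (hf _ (hr_mem y₀ hy₀)) hr_cwa (fun y hy => hr_mem y hy)
    have : ContinuousWithinAt (fun y => d y * f (y * v / d y)) (Icc (0:ℝ) 1) y₀ :=
      (hdcont.continuousWithinAt).mul hf_cwa
    exact this

section integralG

variable {S : Type*} [MeasurableSpace S] {lam : Measure S} [IsFiniteMeasure lam]
  {u v : S → ℝ} (hu : Measurable u) (hv : Measurable v)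
  (hu0 : ∀ s, 0 ≤ u s) (hv0 : ∀ s, 0 ≤ v s) (huv : ∀ᵐ s ∂lam, u s + v s = 1)
  {f : ℝ → ℝ} (hfc : ContinuousOn f (Icc (0:ℝ) 1))
  {M : ℝ} (hM : ∀ x ∈ Icc (0:ℝ) 1, |f x| ≤ M)

include hu hv hu0 hv0 hfc in
lemma F_meas {y : ℝ} (hy : y ∈ Icc (0:ℝ) 1) :
    Measurable (fun s => psi f ((1 - y) * u s) (y * v s)) := by
  simp only [mem_Icc] at hy
  exact measurable_psi_comp hfc (hu.const_mul _) (hv.const_mul _)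
    (fun s => mul_nonneg (by linarith [hy.2]) (hu0 s))
    (fun s => mul_nonneg hy.1 (hv0 s))

include hu0 hv0 huv hM in
lemma F_bound {y : ℝ} (hy : y ∈ Icc (0:ℝ) 1) :
    ∀ᵐ s ∂lam, ‖psi f ((1 - y) * u s) (y * v s)‖ ≤ M := by
  have hM0 : 0 ≤ M := le_trans (abs_nonneg _) (hM 0 (by norm_num))
  simp only [mem_Icc] at hy
  filter_upwards [huv] with s hs
  have h1 : (0:ℝ) ≤ (1 - y) * u s := mul_nonneg (by linarith [hy.2]) (hu0 s)
  have h2 : (0:ℝ) ≤ y * v s := mul_nonneg hy.1 (hv0 s)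
  have hle : (1 - y) * u s + y * v s ≤ 1 := by
    nlinarith [hu0 s, hv0 s, hy.1, hy.2]
  calc ‖psi f ((1 - y) * u s) (y * v s)‖
      ≤ ((1 - y) * u s + y * v s) * M := psi_abs_le f hM h1 h2
    _ ≤ 1 * M := mul_le_mul_of_nonneg_right hle hM0
    _ = M := one_mul M

include hu hv hu0 hv0 huv hfc hM in
lemma F_integrable {y : ℝ} (hy : y ∈ Icc (0:ℝ) 1) :
    Integrable (fun s => psi f ((1 - y) * u s) (y * v s)) lam :=
  (integrable_const M).mono'
    ((F_meas hu hv hu0 hv0 hfc hy).aestronglyMeasurable)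
    (F_bound hu0 hv0 huv hM hy)

include hu hv hu0 hv0 huv hfc hM in
lemma G_concave (hfconc : ConcaveOn ℝ (Icc (0:ℝ) 1) f) :
    ConcaveOn ℝ (Icc (0:ℝ) 1) (fun y => ∫ s, psi f ((1 - y) * u s) (y * v s) ∂lam) := by
  refine ⟨convex_Icc _ _, ?_⟩
  intro y₁ hy₁ y₂ hy₂ t₁ t₂ ht₁ ht₂ hsum
  have hymem : t₁ • y₁ + t₂ • y₂ ∈ Icc (0:ℝ) 1 := (convex_Icc _ _) hy₁ hy₂ ht₁ ht₂ hsum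
  have hint1 := F_integrable hu hv hu0 hv0 huv hfc hM hy₁
  have hint2 := F_integrable hu hv hu0 hv0 huv hfc hM hy₂
  have hint := F_integrable hu hv hu0 hv0 huv hfc hM hymem
  simp only [smul_eq_mul] at hymem hint ⊢
  have key : ∀ s, t₁ * psi f ((1 - y₁) * u s) (y₁ * v s) + t₂ * psi f ((1 - y₂) * u s) (y₂ * v s)
      ≤ psi f ((1 - (t₁ * y₁ + t₂ * y₂)) * u s) ((t₁ * y₁ + t₂ * y₂) * v s) := by
    intro s
    simp only [mem_Icc] at hy₁ hy₂
    have e1 : (1 - (t₁ * y₁ + t₂ * y₂)) * u s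
        = t₁ * ((1 - y₁) * u s) + t₂ * ((1 - y₂) * u s) := by nlinarith [hu0 s]
    have e2 : (t₁ * y₁ + t₂ * y₂) * v s = t₁ * (y₁ * v s) + t₂ * (y₂ * v s) := by ring
    rw [e1, e2]
    calc t₁ * psi f ((1 - y₁) * u s) (y₁ * v s) + t₂ * psi f ((1 - y₂) * u s) (y₂ * v s)
        = psi f (t₁ * ((1 - y₁) * u s)) (t₁ * (y₁ * v s))
          + psi f (t₂ * ((1 - y₂) * u s)) (t₂ * (y₂ * v s)) := by
          rw [psi_smul f ht₁, psi_smul f ht₂]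
      _ ≤ _ := psi_superadd f hfconc
          (mul_nonneg ht₁ (mul_nonneg (by linarith [hy₁.2]) (hu0 s)))
          (mul_nonneg ht₁ (mul_nonneg hy₁.1 (hv0 s)))
          (mul_nonneg ht₂ (mul_nonneg (by linarith [hy₂.2]) (hu0 s)))
          (mul_nonneg ht₂ (mul_nonneg hy₂.1 (hv0 s)))
  calc t₁ • (∫ s, psi f ((1 - y₁) * u s) (y₁ * v s) ∂lam)
        + t₂ • (∫ s, psi f ((1 - y₂) * u s) (y₂ * v s) ∂lam)
      = ∫ s, (t₁ * psi f ((1 - y₁) * u s) (y₁ * v s)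
            + t₂ * psi f ((1 - y₂) * u s) (y₂ * v s)) ∂lam := by
        rw [← integral_smul, ← integral_smul]
        exact (integral_add (hint1.smul t₁) (hint2.smul t₂)).symm
    _ ≤ ∫ s, psi f ((1 - (t₁ * y₁ + t₂ * y₂)) * u s) ((t₁ * y₁ + t₂ * y₂) * v s) ∂lam :=
        integral_mono ((hint1.const_mul _).add (hint2.const_mul _)) hint (fun s => key s)

include hu hv hu0 hv0 huv hfc hM in
lemma G_contOn :
    ContinuousOn (fun y => ∫ s, psi f ((1 - y) * u s) (y * v s) ∂lam) (Icc (0:ℝ) 1) := by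
  intro y₀ hy₀
  refine continuousWithinAt_of_dominated (bound := fun _ => M) ?_ ?_ (integrable_const M) ?_
  · filter_upwards [self_mem_nhdsWithin] with y hy
    exact (F_meas hu hv hu0 hv0 hfc hy).aestronglyMeasurable
  · filter_upwards [self_mem_nhdsWithin] with y hy
    exact F_bound hu0 hv0 huv hM hy
  · exact ae_of_all _ fun s => psi_contOn hfc hM (hu0 s) (hv0 s) y₀ hy₀

end integralG

section bindlemma

open ProbabilityTheory

lemma bind_eq_snd_compProd {α β : Type*} [MeasurableSpace α] [MeasurableSpace β]
    (μ : Measure α) [IsProbabilityMeasure μ] {k : α → Measure β} (hk : Measurable k)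
    (hkp : ∀ y, IsProbabilityMeasure (k y)) :
    μ.bind k = (μ ⊗ₘ (⟨k, hk⟩ : Kernel α β)).snd := by
  set κ : Kernel α β := ⟨k, hk⟩ with hκ
  haveI : IsMarkovKernel κ := ⟨hkp⟩
  ext s hs
  rw [Measure.bind_apply hs hk.aemeasurable, Measure.snd_apply hs,
    Measure.compProd_apply (measurable_snd hs)]
  rfl

lemma integral_bind_prob {α β : Type*} [MeasurableSpace α] [MeasurableSpace β]
    (μ : Measure α) [IsProbabilityMeasure μ] {k : α → Measure β} (hk : Measurable k)
    (hkp : ∀ y, IsProbabilityMeasure (k y)) {f : β → ℝ} (hf : Measurable f)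
    {C : ℝ} (hC : ∀ x, ‖f x‖ ≤ C) :
    ∫ x, f x ∂(μ.bind k) = ∫ y, (∫ x, f x ∂(k y)) ∂μ := by
  set κ : Kernel α β := ⟨k, hk⟩ with hκ
  haveI : IsMarkovKernel κ := ⟨hkp⟩
  have hint : Integrable (fun p : α × β => f p.2) (μ ⊗ₘ κ) := by
    refine (integrable_const C).mono' ((hf.comp measurable_snd).aestronglyMeasurable) ?_
    exact ae_of_all _ fun p => hC p.2
  rw [bind_eq_snd_compProd μ hk hkp, Measure.snd,
    integral_map measurable_snd.aemeasurable hf.aestronglyMeasurable,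
    Measure.integral_compProd hint]
  rfl

lemma bind_univ_one {α β : Type*} [MeasurableSpace α] [MeasurableSpace β]
    (μ : Measure α) [IsProbabilityMeasure μ] {k : α → Measure β} (hk : Measurable k)
    (hkp : ∀ y, IsProbabilityMeasure (k y)) :
    (μ.bind k) univ = 1 := by
  rw [Measure.bind_apply MeasurableSet.univ hk.aemeasurable]
  have : ∀ y, k y univ = 1 := fun y => (hkp y).measure_univ
  simp [this]

end bindlemma

section bridge

variable {S : Type*} [MeasurableSpace S]

lemma m_prob (G₀ G₁ : Measure S) [IsProbabilityMeasure G₀] [IsProbabilityMeasure G₁]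
    (y : I) : IsProbabilityMeasure
      (ENNReal.ofReal (1 - (y:ℝ)) • G₀ + ENNReal.ofReal (y:ℝ) • G₁) := by
  constructor
  simp only [Measure.coe_add, Pi.add_apply, Measure.coe_smul, Pi.smul_apply,
    measure_univ, smul_eq_mul, mul_one]
  rw [← ENNReal.ofReal_add (by linarith [y.2.2]) y.2.1]
  norm_num

lemma bridge (G₀ G₁ : Measure S) [IsProbabilityMeasure G₀] [IsProbabilityMeasure G₁]
    (m : I → Measure S)
    (hm : ∀ y : I, m y = ENNReal.ofReal (1 - (y : ℝ)) • G₀ + ENNReal.ofReal (y : ℝ) • G₁)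
    (p : I → S → I) (hp : ∀ y, Measurable (p y))
    (hpv : ∀ y : I, (fun s => ((p y s : ℝ))) =ᵐ[m y]
      (fun s => (y : ℝ) * (G₁.rnDeriv (m y) s).toReal))
    {f : ℝ → ℝ} (hfc : ContinuousOn f (Icc (0:ℝ) 1)) (y : I) :
    ∫ x, f (x : ℝ) ∂((m y).map (p y)) =
      ∫ s, psi f ((1 - (y:ℝ)) * (G₀.rnDeriv (G₀ + G₁) s).toReal)
        ((y:ℝ) * (G₁.rnDeriv (G₀ + G₁) s).toReal) ∂(G₀ + G₁) := by
  haveI hmy_prob : IsProbabilityMeasure (m y) := by rw [hm y]; exact m_prob G₀ G₁ y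
  set lam : Measure S := G₀ + G₁ with hlam
  set g₀ : S → ℝ≥0∞ := G₀.rnDeriv lam with hg₀
  set g₁ : S → ℝ≥0∞ := G₁.rnDeriv lam with hg₁
  have hmg₀ : Measurable g₀ := Measure.measurable_rnDeriv _ _
  have hmg₁ : Measurable g₁ := Measure.measurable_rnDeriv _ _
  have habs₀ : G₀ ≪ lam := Measure.absolutelyContinuous_of_le (Measure.le_add_right le_rfl)
  have habs₁ : G₁ ≪ lam := Measure.absolutelyContinuous_of_le (Measure.le_add_left le_rfl)
  have hwd₀ : lam.withDensity g₀ = G₀ := Measure.withDensity_rnDeriv_eq _ _ habs₀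
  have hwd₁ : lam.withDensity g₁ = G₁ := Measure.withDensity_rnDeriv_eq _ _ habs₁
  have hsum : ∀ᵐ s ∂lam, g₀ s + g₁ s = 1 := by
    have h1 := Measure.rnDeriv_add G₀ G₁ lam
    have h2 := Measure.rnDeriv_self lam
    filter_upwards [h1, h2] with s hs1 hs2
    have : (G₀ + G₁).rnDeriv lam s = 1 := hs2
    rw [← this, hs1]
    rfl
  have hy0 : (0:ℝ) ≤ (y:ℝ) := y.2.1
  have hy1 : (y:ℝ) ≤ 1 := y.2.2
  -- the density of m y with respect to lam
  set cy : S → ℝ≥0∞ :=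
    fun s => ENNReal.ofReal (1 - (y:ℝ)) * g₀ s + ENNReal.ofReal (y:ℝ) * g₁ s with hcy
  have hmcy : Measurable cy := (hmg₀.const_mul _).add (hmg₁.const_mul _)
  have hm' : m y = lam.withDensity cy := by
    rw [hm y, ← hwd₀, ← hwd₁, ← withDensity_smul _ hmg₀, ← withDensity_smul _ hmg₁,
      ← withDensity_add_left ((hmg₀.const_smul _)) _]
    rfl
  -- step 1: unfold the pushforward
  have hfI : Continuous fun x : I => f (x : ℝ) := continuousOn_iff_continuous_restrict.mp hfc
  rw [integral_map (hp y).aemeasurable hfI.aestronglyMeasurable]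
  -- step 2: replace p y with the density
  rw [integral_congr_ae ((hpv y).mono fun s hs => congrArg f hs)]
  -- now case on y
  rcases eq_or_lt_of_le hy0 with h0 | h0
  · -- y = 0
    have hval : ((y:ℝ)) = 0 := h0.symm
    have hL : ∫ s, f ((y:ℝ) * (G₁.rnDeriv (m y) s).toReal) ∂(m y) = f 0 := by
      simp [hval]
    have hR : ∀ s, psi f ((1 - (y:ℝ)) * (g₀ s).toReal) ((y:ℝ) * (g₁ s).toReal)
        = (g₀ s).toReal * f 0 := by
      intro s
      simp [psi, hval]
    rw [hL]
    calc f 0 = (∫ s, (g₀ s).toReal ∂lam) * f 0 := by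
          rw [Measure.integral_toReal_rnDeriv habs₀]
          simp
      _ = ∫ s, (g₀ s).toReal * f 0 ∂lam := by rw [integral_mul_const]
      _ = _ := by
          refine integral_congr_ae (ae_of_all _ fun s => ?_)
          exact (hR s).symm
  rcases eq_or_lt_of_le hy1 with h1 | h1
  · -- y = 1
    have hmy : m y = G₁ := by rw [hm y, h1]; simp
    have hL : ∫ s, f ((y:ℝ) * (G₁.rnDeriv (m y) s).toReal) ∂(m y) = f 1 := by
      rw [hmy]
      have hae : (fun s => f ((y:ℝ) * (G₁.rnDeriv G₁ s).toReal)) =ᵐ[G₁]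
          (fun _ => f 1) := by
        filter_upwards [Measure.rnDeriv_self G₁] with s hs
        rw [hs]
        simp [h1]
      rw [integral_congr_ae hae]
      simp
    have hR : ∀ s, psi f ((1 - (y:ℝ)) * (g₀ s).toReal) ((y:ℝ) * (g₁ s).toReal)
        = (g₁ s).toReal * f 1 := by
      intro s
      by_cases hv : (g₁ s).toReal = 0
      · simp [psi, h1, hv]
      · simp only [psi, h1, one_mul, sub_self, zero_mul, zero_add]
        rw [div_self hv]
    rw [hL]
    calc f 1 = (∫ s, (g₁ s).toReal ∂lam) * f 1 := by
          rw [Measure.integral_toReal_rnDeriv habs₁]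
          simp
      _ = ∫ s, (g₁ s).toReal * f 1 ∂lam := by rw [integral_mul_const]
      _ = _ := by
          refine integral_congr_ae (ae_of_all _ fun s => ?_)
          exact (hR s).symm
  -- main case 0 < y < 1
  have hy0' : (0:ℝ) < 1 - (y:ℝ) := by linarith
  have hne0 : ∀ᵐ s ∂lam, cy s ≠ 0 := by
    filter_upwards [hsum] with s hs
    intro hzero
    rw [hcy] at hzero
    simp only [add_eq_zero, mul_eq_zero] at hzero
    have hg0 : g₀ s = 0 := by
      rcases hzero.1 with h | h
      · rw [ENNReal.ofReal_eq_zero] at h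
        linarith
      · exact h
    have hg1 : g₁ s = 0 := by
      rcases hzero.2 with h | h
      · rw [ENNReal.ofReal_eq_zero] at h
        linarith
      · exact h
    rw [hg0, hg1] at hs
    simp at hs
  have hne_top : ∀ᵐ s ∂lam, cy s ≠ ∞ := by
    filter_upwards [Measure.rnDeriv_lt_top G₀ lam, Measure.rnDeriv_lt_top G₁ lam] with s h4 h5
    exact ENNReal.add_ne_top.mpr
      ⟨ENNReal.mul_ne_top ENNReal.ofReal_ne_top h4.ne, ENNReal.mul_ne_top ENNReal.ofReal_ne_top h5.ne⟩
  have hrn : G₁.rnDeriv (m y) =ᵐ[lam] fun s => (cy s)⁻¹ * g₁ s := by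
    rw [hm']
    exact Measure.rnDeriv_withDensity_right G₁ lam hmcy.aemeasurable hne0 hne_top
  have hacm : m y ≪ lam := by rw [hm']; exact withDensity_absolutelyContinuous lam cy
  have hrn' : (fun s => f ((y:ℝ) * (G₁.rnDeriv (m y) s).toReal)) =ᵐ[m y]
      (fun s => f ((y:ℝ) * ((cy s)⁻¹ * g₁ s).toReal)) := by
    filter_upwards [hacm.ae_eq hrn] with s hs
    rw [hs]
  rw [integral_congr_ae hrn']
  have hd_eq : m y = lam.withDensity (fun s => ((cy s).toNNReal : ℝ≥0∞)) := by
    rw [hm']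
    exact withDensity_congr_ae (hne_top.mono fun s hs => (ENNReal.coe_toNNReal hs).symm)
  rw [hd_eq, integral_withDensity_eq_integral_smul hmcy.ennreal_toNNReal]
  refine integral_congr_ae ?_
  filter_upwards [hsum, hne0, hne_top, Measure.rnDeriv_lt_top G₀ lam,
    Measure.rnDeriv_lt_top G₁ lam] with s hs1 hs2 hs3 hs4 hs5
  set a : ℝ := (1 - (y:ℝ)) * (g₀ s).toReal with ha
  set b : ℝ := (y:ℝ) * (g₁ s).toReal with hb
  have hcyt : (cy s).toReal = a + b := by
    rw [hcy]
    rw [ENNReal.toReal_add (ENNReal.mul_ne_top ENNReal.ofReal_ne_top hs4.ne)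
      (ENNReal.mul_ne_top ENNReal.ofReal_ne_top hs5.ne),
      ENNReal.toReal_mul, ENNReal.toReal_mul, ENNReal.toReal_ofReal hy0'.le,
      ENNReal.toReal_ofReal hy0]
  have hval : (y:ℝ) * ((cy s)⁻¹ * g₁ s).toReal = b / (a + b) := by
    rw [ENNReal.toReal_mul, ENNReal.toReal_inv, ← hcyt, hb]
    ring
  rw [hval]
  have hsmul : ((cy s).toNNReal : ℝ) = a + b := by
    rw [← hcyt]; rfl
  show ((cy s).toNNReal : ℝ) * f (b / (a + b)) = psi f a b
  rw [hsmul]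
  rfl

end bridge

section bridge2
variable {S : Type*} [MeasurableSpace S]

lemma uv_sum (G₀ G₁ : Measure S) [IsProbabilityMeasure G₀] [IsProbabilityMeasure G₁] :
    ∀ᵐ s ∂(G₀ + G₁),
      (G₀.rnDeriv (G₀ + G₁) s).toReal + (G₁.rnDeriv (G₀ + G₁) s).toReal = 1 := by
  filter_upwards [Measure.rnDeriv_add G₀ G₁ (G₀ + G₁), Measure.rnDeriv_self (G₀ + G₁),
    Measure.rnDeriv_lt_top G₀ (G₀ + G₁), Measure.rnDeriv_lt_top G₁ (G₀ + G₁)]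
    with s h1 h2 h3 h4
  rw [← ENNReal.toReal_add h3.ne h4.ne]
  have hsum : G₀.rnDeriv (G₀ + G₁) s + G₁.rnDeriv (G₀ + G₁) s = 1 := by
    have := h1.symm.trans h2
    exact this
  rw [hsum]
  simp

lemma bary_k (G₀ G₁ : Measure S) [IsProbabilityMeasure G₀] [IsProbabilityMeasure G₁]
    (m : I → Measure S)
    (hm : ∀ y : I, m y = ENNReal.ofReal (1 - (y : ℝ)) • G₀ + ENNReal.ofReal (y : ℝ) • G₁)
    (p : I → S → I) (hp : ∀ y, Measurable (p y))
    (hpv : ∀ y : I, (fun s => ((p y s : ℝ))) =ᵐ[m y]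
      (fun s => (y : ℝ) * (G₁.rnDeriv (m y) s).toReal)) (y : I) :
    ∫ x, (x : ℝ) ∂((m y).map (p y)) = (y : ℝ) := by
  haveI hmy_prob : IsProbabilityMeasure (m y) := by rw [hm y]; exact m_prob G₀ G₁ y
  rw [integral_map (hp y).aemeasurable (continuous_subtype_val.aestronglyMeasurable)]
  rw [integral_congr_ae (hpv y)]
  rcases eq_or_lt_of_le y.2.1 with h0 | h0
  · simp [← h0]
  · have hle : ENNReal.ofReal (y:ℝ) • G₁ ≤ m y := by
      rw [hm y]
      exact Measure.le_add_left le_rfl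
    have habs : G₁ ≪ m y :=
      (Measure.absolutelyContinuous_smul (by rw [Ne, ENNReal.ofReal_eq_zero]; push_neg; exact h0)).trans
        (Measure.absolutelyContinuous_of_le hle)
    rw [integral_const_mul, Measure.integral_toReal_rnDeriv habs]
    simp

end bridge2


/-- the kernel generated by a conditionally independent signal is a
probability kernel and is Blackwell order preserving. -/
theorem conditionally_independent_blackwell
    {S : Type*} [MeasurableSpace S] [StandardBorelSpace S]
    (G₀ G₁ : Measure S) [IsProbabilityMeasure G₀] [IsProbabilityMeasure G₁]
    (m : I → Measure S)
    (hm : ∀ y : I, m y = ENNReal.ofReal (1 - (y : ℝ)) • G₀ + ENNReal.ofReal (y : ℝ) • G₁)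
    (p : I → S → I) (hp : ∀ y, Measurable (p y))
    (hpv : ∀ y : I, (fun s => ((p y s : ℝ))) =ᵐ[m y]
      (fun s => (y : ℝ) * (G₁.rnDeriv (m y) s).toReal))
    (k : I → Measure I) (hk : ∀ y, k y = (m y).map (p y)) (hmeas : Measurable k) :
    (∀ y : I, IsProbabilityMeasure (k y)) ∧
    (∀ y : I, ∫ x, (x : ℝ) ∂(k y) = (y : ℝ)) ∧
    ∃ K : ProbKernel, K.k = k ∧ BlackwellPreserving K := by
  have h1 : ∀ y : I, IsProbabilityMeasure (k y) := by
    intro y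
    haveI : IsProbabilityMeasure (m y) := by rw [hm y]; exact m_prob G₀ G₁ y
    rw [hk y]
    exact Measure.isProbabilityMeasure_map (hp y).aemeasurable
  have h2 : ∀ y : I, ∫ x, (x : ℝ) ∂(k y) = (y : ℝ) := by
    intro y
    rw [hk y]
    exact bary_k G₀ G₁ m hm p hp hpv y
  refine ⟨h1, h2, ⟨⟨k, hmeas, h1, h2⟩, rfl, ?_⟩⟩
  intro μ ν hμ hν _hbary hble
  intro f hfc hfconc
  -- setup
  set u : S → ℝ := fun s => (G₀.rnDeriv (G₀ + G₁) s).toReal with hu_def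
  set v : S → ℝ := fun s => (G₁.rnDeriv (G₀ + G₁) s).toReal with hv_def
  have hu : Measurable u := (Measure.measurable_rnDeriv _ _).ennreal_toReal
  have hv : Measurable v := (Measure.measurable_rnDeriv _ _).ennreal_toReal
  have hu0 : ∀ s, 0 ≤ u s := fun s => ENNReal.toReal_nonneg
  have hv0 : ∀ s, 0 ≤ v s := fun s => ENNReal.toReal_nonneg
  have huv : ∀ᵐ s ∂(G₀ + G₁), u s + v s = 1 := uv_sum G₀ G₁
  obtain ⟨M, hMn⟩ := isCompact_Icc.exists_bound_of_continuousOn hfc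
  have hM : ∀ x ∈ Icc (0:ℝ) 1, |f x| ≤ M := fun x hx => by
    rw [← Real.norm_eq_abs]; exact hMn x hx
  set Gf : ℝ → ℝ := fun t => ∫ s, psi f ((1 - t) * u s) (t * v s) ∂(G₀ + G₁) with hGf_def
  have hGc : ContinuousOn Gf (Icc (0:ℝ) 1) := G_contOn hu hv hu0 hv0 huv hfc hM
  have hGconc : ConcaveOn ℝ (Icc (0:ℝ) 1) Gf := G_concave hu hv hu0 hv0 huv hfc hM hfconc
  have hbridge : ∀ y : I, ∫ x, f (x : ℝ) ∂(k y) = Gf (y : ℝ) := by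
    intro y
    rw [hk y]
    exact bridge G₀ G₁ m hm p hp hpv hfc y
  -- the pushforward integrals
  have hfI : Continuous fun x : I => f (x : ℝ) := continuousOn_iff_continuous_restrict.mp hfc
  have hfIb : ∀ x : I, ‖f (x : ℝ)‖ ≤ M := fun x => hMn _ x.2
  have hpush : ∀ (ρ : Measure I), IsProbabilityMeasure ρ →
      ∫ x, f (x : ℝ) ∂(ρ.bind k) = ∫ x, Gf (x : ℝ) ∂ρ := by
    intro ρ hρ
    haveI := hρ
    rw [integral_bind_prob ρ hmeas h1 hfI.measurable hfIb]
    exact integral_congr_ae (ae_of_all _ fun y => hbridge y)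
  have htm : ∀ (ρ : Measure I), IsProbabilityMeasure ρ → tmass (ρ.bind k) = 1 := by
    intro ρ hρ
    haveI := hρ
    unfold tmass
    rw [bind_univ_one ρ hmeas h1]
    simp
  have htmμ : tmass μ = 1 := by unfold tmass; simp
  have htmν : tmass ν = 1 := by unfold tmass; simp
  have key := hble Gf hGc hGconc
  rw [htmμ, htmν, div_one, div_one] at key
  show (∫ x, f (x : ℝ) ∂(ν.bind k)) / tmass (ν.bind k)
      ≤ (∫ x, f (x : ℝ) ∂(μ.bind k)) / tmass (μ.bind k)
  rw [htm μ hμ, htm ν hν, div_one, div_one, hpush μ hμ, hpush ν hν]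
  exact key

end Persuasion
end
end
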